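/- arXiv:2401.00801 — 7 statements merged into one kernel-verified Lean document; each statement's English description precedes it below -/
import Mathlib

section
/- Let d ∈ ℕ and ε ∈ (0,1). Let w : ℕ → ℝ satisfy w(0) = 1 and, for all r ∈ ℕ₀: if w(r) > ε then w(r+1) = w(r)·((w(r) − ε)/w(r))^{1/d}, and if w(r) ≤ ε then w(r+1) = w(r). Then for every integer r ≥ d·(1/ε − 1) one has w(r) ≤ ε. In particular, min{ r ∈ ℕ₀ : w(r) ≤ ε } ≤ ⌈d·(ε^{−1} − 1)⌉. -/
lemma thiemard_aux_rpow (d : ℕ) (hd : 1 ≤ d) (t : ℝ) (ht0 : 0 ≤ t) (ht1 : t ≤ 1) :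
    (1 - t) ^ ((1 : ℝ) / d) ≤ 1 - t / d := by
  have hd0 : (0 : ℝ) < d := by exact_mod_cast hd
  have hy : 0 ≤ 1 - t / d := by
    have : t / d ≤ 1 := by
      rw [div_le_one hd0]
      calc t ≤ 1 := ht1
        _ ≤ d := by exact_mod_cast hd
    linarith
  have hb : 1 - t ≤ (1 - t / d) ^ d := by
    have h2 : (-2 : ℝ) ≤ -(t / d) := by
      have : t / d ≤ 1 := by linarith
      nlinarith [div_nonneg ht0 hd0.le]
    have := one_add_mul_le_pow h2 d
    have hcanc : (d : ℝ) * (t / d) = t := by field_simp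
    calc 1 - t = 1 + (d : ℝ) * (-(t / d)) := by rw [mul_neg, hcanc]; ring
      _ ≤ (1 + -(t / d)) ^ d := this
      _ = (1 - t / d) ^ d := by ring_nf
  have h1 : (1 - t) ^ ((1 : ℝ) / d) ≤ ((1 - t / d) ^ d) ^ ((1 : ℝ) / d) := by
    apply Real.rpow_le_rpow (by linarith) hb
    positivity
  have h2 : ((1 - t / d) ^ d) ^ ((1 : ℝ) / d) = 1 - t / d := by
    rw [← Real.rpow_natCast (1 - t / d) d, ← Real.rpow_mul hy]
    rw [mul_one_div, div_self (by positivity), Real.rpow_one]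
  linarith [h1, h2.le, h2.ge]

/-- The weights `w r = W(Q^{(r)}_{1,…,1})` along the leftmost path of Thiémard's
decomposition of `[0,1)^d` satisfy `w 0 = 1` and `w (r+1) = w r ((w r - ε)/w r)^{1/d}`
as long as `w r > ε`. Then `w r ≤ ε` for every `r ≥ d (1/ε - 1)`; in particular the
height `h = min { r : w r ≤ ε }` of the partition satisfies `h ≤ ⌈d (ε⁻¹ - 1)⌉`. -/
theorem thiemard_height_bound (d : ℕ) (hd : 1 ≤ d) (ε : ℝ) (hε : ε ∈ Set.Ioo (0 : ℝ) 1)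
    (w : ℕ → ℝ) (hw0 : w 0 = 1)
    (hrec : ∀ r : ℕ, ε < w r → w (r + 1) = w r * ((w r - ε) / w r) ^ ((1 : ℝ) / d))
    (hstop : ∀ r : ℕ, w r ≤ ε → w (r + 1) = w r) :
    (∀ r : ℕ, (d : ℝ) * (1 / ε - 1) ≤ r → w r ≤ ε) ∧
    sInf { r : ℕ | w r ≤ ε } ≤ ⌈(d : ℝ) * (ε⁻¹ - 1)⌉₊ := by
  obtain ⟨hε0, hε1⟩ := hε
  have hd0 : (0 : ℝ) < d := by exact_mod_cast hd
  -- key invariant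
  have key : ∀ r : ℕ, w r ≤ ε ∨ w r ≤ 1 - r * ε / d := by
    intro r
    induction r with
    | zero => right; simp [hw0]
    | succ r ih =>
      rcases le_or_gt (w r) ε with h | h
      · left; rw [hstop r h]; exact h
      · have hw1 : w r ≤ 1 - r * ε / d := by
          rcases ih with h' | h'
          · exact absurd h' (not_le.mpr h)
          · exact h'
        have hwpos : 0 < w r := lt_trans hε0 h
        have ht0 : 0 ≤ ε / w r := by positivity
        have ht1 : ε / w r ≤ 1 := by rw [div_le_one hwpos]; linarith
        have hfrac : (w r - ε) / w r = 1 - ε / w r := by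
          field_simp
        have hstep : w (r + 1) ≤ w r - ε / d := by
          rw [hrec r h, hfrac]
          have := thiemard_aux_rpow d hd (ε / w r) ht0 ht1
          have hmul := mul_le_mul_of_nonneg_left this hwpos.le
          have heq : w r * (1 - (ε / w r) / d) = w r - ε / d := by
            field_simp
          linarith [hmul, heq.le, heq.ge]
        right
        have : w (r + 1) ≤ 1 - r * ε / d - ε / d := by linarith
        have heq : (1 : ℝ) - r * ε / d - ε / d = 1 - (r + 1 : ℕ) * ε / d := by
          push_cast; ring
        linarith [heq.le, heq.ge]
  have part1 : ∀ r : ℕ, (d : ℝ) * (1 / ε - 1) ≤ r → w r ≤ ε := by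
    intro r hr
    rcases key r with h | h
    · exact h
    · -- from hr : d*(1/ε-1) ≤ r, multiply by ε: d - d*ε ≤ r*ε
      have h1 : (d : ℝ) * (1 / ε - 1) * ε ≤ r * ε :=
        mul_le_mul_of_nonneg_right hr hε0.le
      have h2 : (d : ℝ) * (1 / ε - 1) * ε = d - d * ε := by field_simp
      have h3 : (d : ℝ) - d * ε ≤ r * ε := by linarith [h1, h2.le, h2.ge]
      have h4 : (d : ℝ) * w r ≤ d * (1 - r * ε / d) := by
        exact mul_le_mul_of_nonneg_left h hd0.le
      have h5 : (d : ℝ) * (1 - r * ε / d) = d - r * ε := by field_simp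
      nlinarith
  refine ⟨part1, ?_⟩
  apply Nat.sInf_le
  show w ⌈(d : ℝ) * (ε⁻¹ - 1)⌉₊ ≤ ε
  apply part1
  rw [one_div]
  exact Nat.le_ceil _
end

section
/- Let d ∈ ℕ and ε ∈ (0,1), and let f(ε) := 1 + Σ_{k=1}^{∞} ((Π_{m=1}^{k}(m − 1/d))/(k+1)!)·ε^k. Let w : ℕ → ℝ satisfy w(0) = 1 and, for all r ∈ ℕ₀: if w(r) > ε then w(r+1) = w(r)·((w(r) − ε)/w(r))^{1/d}, and if w(r) ≤ ε then w(r+1) = w(r). Then for every integer r ≥ d·(ε^{−1} − 1)/f(ε) one has w(r) ≤ ε. In particular, min{ r ∈ ℕ₀ : w(r) ≤ ε } ≤ ⌈ d·(ε^{−1} − 1)/f(ε) ⌉. -/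
/-!
By the binomial series, `1 - (1 - x) ^ θ = θ x F(x)` for `|x| < 1`, where `F = heightSeries θ`
is the paper's `f` for `θ = 1/d`; for `0 < θ ≤ 1` its coefficients are nonnegative, so `F` is
monotone on `[0, 1)`. Writing `w ((w - ε) / w) ^ θ = w (1 - ε / w) ^ θ = w - θ ε F(ε / w)`, each
step from `ε < w ≤ 1` lowers the weight by at least `θ ε F(ε)`, so `w r ≤ 1 - r ε F(ε) / d`
as long as `w r > ε`.
-/

open Finset

theorem Real.hasSum_choose_mul_pow (a : ℝ) {x : ℝ} (hx : |x| < 1) :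
    HasSum (fun n ↦ Ring.choose a n * x ^ n) ((1 + x) ^ a) := by
  have := (Real.one_add_rpow_hasFPowerSeriesOnBall_zero (a := a)).hasSum (y := x) ?_
  · simpa [List.prod_replicate, binomialSeries, mul_comm] using this
  · simpa [enorm_eq_nnnorm, ← NNReal.coe_lt_one] using hx

theorem Ring.choose_eq_prod_range_div {K : Type*} [Field K] [CharZero K] (a : K) (n : ℕ) :
    Ring.choose a n = (∏ j ∈ range n, (a - j)) / n.factorial := by
  rw [Ring.choose_eq_smul, ← Polynomial.aeval_eq_smeval, Polynomial.aeval_def,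
    Polynomial.eval₂_eq_eval_map, descPochhammer_map, descPochhammer_eval_eq_prod_range,
    smul_eq_mul, div_eq_inv_mul]

theorem prod_range_succ_sub_mul_neg_one_pow {R : Type*} [CommRing R] (a : R) (n : ℕ) :
    (∏ j ∈ range (n + 1), (a - j)) * (-1) ^ n = a * ∏ m ∈ Icc 1 n, ((m : R) - a) := by
  induction n with
  | zero => simp
  | succ n ih =>
    rw [prod_range_succ, prod_Icc_succ_top (by omega), pow_succ]
    linear_combination (((n + 1 : ℕ) : R) - a) * ih

namespace Thiemard

noncomputable def heightCoeff (θ : ℝ) (k : ℕ) : ℝ :=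
  (∏ m ∈ Icc 1 (k + 1), ((m : ℝ) - θ)) / (Nat.factorial (k + 2))

noncomputable def heightSeries (θ x : ℝ) : ℝ :=
  1 + ∑' k : ℕ, heightCoeff θ k * x ^ (k + 1)

theorem neg_choose_mul_neg_pow (θ x : ℝ) (k : ℕ) :
    -(Ring.choose θ (k + 2) * (-x) ^ (k + 2)) = θ * x * (heightCoeff θ k * x ^ (k + 1)) := by
  have h := prod_range_succ_sub_mul_neg_one_pow θ (k + 1)
  rw [Ring.choose_eq_prod_range_div, heightCoeff, neg_pow, div_eq_mul_inv, div_eq_mul_inv]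
  linear_combination (x ^ (k + 2) * ((k + 2).factorial : ℝ)⁻¹) * h

theorem hasSum_heightCoeff_mul_pow (θ : ℝ) {x : ℝ} (hx : |x| < 1) :
    HasSum (fun k ↦ θ * x * (heightCoeff θ k * x ^ (k + 1))) (1 - (1 - x) ^ θ - θ * x) := by
  have h := (hasSum_nat_add_iff' 2).mpr (Real.hasSum_choose_mul_pow θ (x := -x) (by simpa using hx))
  have hvalue : 1 - (1 - x) ^ θ - θ * x
      = -((1 - x) ^ θ - ∑ i ∈ range 2, Ring.choose θ i * (-x) ^ i) := by
    simp only [sum_range_succ, sum_range_zero, Ring.choose_zero_right, Ring.choose_one_right]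
    ring
  rw [hvalue, sub_eq_add_neg 1 x]
  simpa only [neg_choose_mul_neg_pow] using h.neg

theorem one_sub_one_sub_rpow (θ : ℝ) {x : ℝ} (hx : |x| < 1) :
    1 - (1 - x) ^ θ = θ * x * heightSeries θ x := by
  rw [heightSeries, mul_add, mul_one, ← tsum_mul_left, (hasSum_heightCoeff_mul_pow θ hx).tsum_eq]
  ring

theorem summable_heightCoeff_mul_pow {θ : ℝ} (hθ : θ ≠ 0) {x : ℝ} (hx : |x| < 1) :
    Summable (fun k ↦ heightCoeff θ k * x ^ (k + 1)) := by
  rcases eq_or_ne x 0 with rfl | hx0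
  · simp
  · exact (summable_mul_left_iff (mul_ne_zero hθ hx0)).mp (hasSum_heightCoeff_mul_pow θ hx).summable

theorem heightCoeff_nonneg {θ : ℝ} (hθ : θ ≤ 1) (k : ℕ) : 0 ≤ heightCoeff θ k := by
  refine div_nonneg (prod_nonneg fun m hm ↦ ?_) (Nat.cast_nonneg _)
  have : (1 : ℝ) ≤ m := by exact_mod_cast (mem_Icc.mp hm).1
  linarith

theorem one_le_heightSeries {θ : ℝ} (hθ : θ ≤ 1) {x : ℝ} (hx : 0 ≤ x) : 1 ≤ heightSeries θ x :=
  le_add_of_nonneg_right <| tsum_nonneg fun k ↦ mul_nonneg (heightCoeff_nonneg hθ k) (pow_nonneg hx _)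

theorem heightSeries_monotoneOn {θ : ℝ} (hθ0 : 0 < θ) (hθ1 : θ ≤ 1) :
    MonotoneOn (heightSeries θ) (Set.Ico 0 1) := by
  intro x ⟨hx0, _⟩ y ⟨hy0, hy1⟩ hxy
  have hle : ∀ k, heightCoeff θ k * x ^ (k + 1) ≤ heightCoeff θ k * y ^ (k + 1) := fun k ↦
    mul_le_mul_of_nonneg_left (pow_le_pow_left₀ hx0 hxy _) (heightCoeff_nonneg hθ1 k)
  have hy : Summable (fun k ↦ heightCoeff θ k * y ^ (k + 1)) :=
    summable_heightCoeff_mul_pow hθ0.ne' (abs_lt.mpr ⟨by linarith, hy1⟩)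
  have hx : Summable (fun k ↦ heightCoeff θ k * x ^ (k + 1)) :=
    hy.of_nonneg_of_le (fun k ↦ mul_nonneg (heightCoeff_nonneg hθ1 k) (pow_nonneg hx0 _)) hle
  exact add_le_add_right (hx.tsum_le_tsum hle hy) 1

theorem mul_div_rpow_le_sub {θ ε w : ℝ} (hθ0 : 0 < θ) (hθ1 : θ ≤ 1) (hε : 0 < ε) (hεw : ε < w)
    (hw1 : w ≤ 1) : w * ((w - ε) / w) ^ θ ≤ w - θ * ε * heightSeries θ ε := by
  have hw : 0 < w := hε.trans hεw
  have hεw' : ε / w < 1 := (div_lt_one hw).mpr hεw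
  have hstep : w * ((w - ε) / w) ^ θ = w - θ * ε * heightSeries θ (ε / w) := by
    have h := one_sub_one_sub_rpow θ (x := ε / w) (abs_lt.mpr ⟨by linarith [div_pos hε hw], hεw'⟩)
    rw [show (w - ε) / w = 1 - ε / w by field_simp, show (1 - ε / w) ^ θ = 1 - θ * (ε / w) *
      heightSeries θ (ε / w) by linarith]
    field_simp
  have hmono : heightSeries θ ε ≤ heightSeries θ (ε / w) :=
    heightSeries_monotoneOn hθ0 hθ1 ⟨hε.le, hεw.trans_le hw1⟩ ⟨(div_pos hε hw).le, hεw'⟩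
      (le_div_self hε.le hw hw1)
  rw [hstep]
  gcongr

end Thiemard

theorem le_of_one_sub_le_mul_of_decrease {w : ℕ → ℝ} {ε δ : ℝ} (hδ : 0 ≤ δ) (hw0 : w 0 ≤ 1)
    (hdec : ∀ r, ε < w r → w r ≤ 1 → w (r + 1) ≤ w r - δ) (hstop : ∀ r, w r ≤ ε → w (r + 1) ≤ ε)
    {r : ℕ} (hr : 1 - ε ≤ r * δ) : w r ≤ ε := by
  have hbound : ∀ r : ℕ, w r ≤ ε ∨ w r ≤ 1 - r * δ := by
    intro r
    induction r with
    | zero => simpa using Or.inr hw0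
    | succ r ih =>
      by_cases h : w r ≤ ε
      · exact Or.inl (hstop r h)
      · have hwr := ih.resolve_left h
        have hrδ : 0 ≤ (r : ℝ) * δ := by positivity
        have := hdec r (not_le.mp h) (by linarith)
        push_cast
        exact Or.inr (by linarith)
  exact (hbound r).elim id fun h ↦ by linarith

open Thiemard

/-- Improved height bound for Thiémard's decomposition: with
`f(ε) = 1 + ∑_{k=1}^∞ ((∏_{m=1}^k (m - 1/d))/(k+1)!) ε^k`, the weights `w r` along the
leftmost path of the decomposition (with `w 0 = 1` and
`w (r+1) = w r ((w r - ε)/w r)^{1/d}` as long as `w r > ε`) satisfy `w r ≤ ε` for every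
`r ≥ d (ε⁻¹ - 1)/f(ε)`; in particular the height `min { r : w r ≤ ε }` of the partition
is at most `⌈d (ε⁻¹ - 1)/f(ε)⌉`. -/
theorem thiemard_improved_height_bound (d : ℕ) (hd : 1 ≤ d) (ε : ℝ)
    (hε : ε ∈ Set.Ioo (0 : ℝ) 1)
    (f : ℝ) (hf : f = 1 + ∑' k : ℕ,
      (∏ m ∈ Icc 1 (k + 1), ((m : ℝ) - 1 / d)) / (Nat.factorial (k + 2)) * ε ^ (k + 1))
    (w : ℕ → ℝ) (hw0 : w 0 = 1)
    (hrec : ∀ r : ℕ, ε < w r → w (r + 1) = w r * ((w r - ε) / w r) ^ ((1 : ℝ) / d))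
    (hstop : ∀ r : ℕ, w r ≤ ε → w (r + 1) = w r) :
    (∀ r : ℕ, (d : ℝ) * (ε⁻¹ - 1) / f ≤ r → w r ≤ ε) ∧
    sInf { r : ℕ | w r ≤ ε } ≤ ⌈(d : ℝ) * (ε⁻¹ - 1) / f⌉₊ := by
  obtain ⟨hε0, hε1⟩ := hε
  have hd0 : (0 : ℝ) < d := by exact_mod_cast hd
  have hθ0 : (0 : ℝ) < 1 / d := by positivity
  have hθ1 : (1 : ℝ) / d ≤ 1 := div_le_one_of_le₀ (by exact_mod_cast hd) hd0.le
  have hf' : f = heightSeries (1 / d) ε := hf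
  have hf0 : 0 < f := hf' ▸ one_pos.trans_le (one_le_heightSeries hθ1 hε0.le)
  have main : ∀ r : ℕ, (d : ℝ) * (ε⁻¹ - 1) / f ≤ r → w r ≤ ε := by
    intro r hr
    refine le_of_one_sub_le_mul_of_decrease (δ := 1 / d * ε * f) (by positivity) hw0.le
      (fun r h hw1 ↦ ?_) (fun r h ↦ (hstop r h).trans_le h) ?_
    · rw [hrec r h, hf']
      exact mul_div_rpow_le_sub hθ0 hθ1 hε0 h hw1
    · rw [div_le_iff₀ hf0] at hr
      calc 1 - ε = d * (ε⁻¹ - 1) * ε / d := by field_simp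
        _ ≤ r * f * ε / d := by gcongr
        _ = r * (1 / d * ε * f) := by ring
  exact ⟨main, Nat.sInf_le (main _ (Nat.le_ceil _))⟩
end

section
/- Let d ∈ ℕ, d ≥ 2, and ε ∈ (0,1], and set h := ⌈d/ε⌉ − d. Then binom(d+h, d) ≤ (d^d/d!) · (1/ε + 1/d) · (1/ε) · Π_{k=1}^{d−2} (1/ε − k/d). -/
open Finset

/-- The binomial estimate (2.13): for `d ≥ 2`, `ε ∈ (0,1]` and `h = ⌈d/ε⌉ - d`,
`binom(d + h, d) ≤ (d^d/d!) (1/ε + 1/d) (1/ε) ∏_{k=1}^{d-2} (1/ε - k/d)`. -/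
theorem binom_height_estimate (d : ℕ) (hd : 2 ≤ d) (ε : ℝ) (hε : ε ∈ Set.Ioc (0 : ℝ) 1)
    (h : ℕ) (hh : h = ⌈(d : ℝ) / ε⌉₊ - d) :
    ((d + h).choose d : ℝ) ≤
      (d : ℝ) ^ d / (Nat.factorial d) * (1 / ε + 1 / d) * (1 / ε) *
        ∏ k ∈ Icc 1 (d - 2), (1 / ε - (k : ℝ) / d) := by
  obtain ⟨hε0, hε1⟩ := hε
  set N := ⌈(d : ℝ) / ε⌉₊ with hN
  have hd0 : (0 : ℝ) < d := by positivity
  have hdle : (d : ℝ) ≤ (d : ℝ) / ε := by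
    rw [le_div_iff₀ hε0]; nlinarith
  have hdN : d ≤ N := by
    have h1 : (d : ℝ) ≤ (N : ℝ) := hdle.trans (Nat.le_ceil _)
    exact_mod_cast h1
  have hdh : d + h = N := by omega
  have hNle : (N : ℝ) ≤ (d : ℝ) / ε + 1 := (Nat.ceil_lt_add_one (by positivity)).le
  -- descFactorial expression
  have hdesc : ((N.choose d : ℝ)) * (Nat.factorial d : ℝ) = ∏ j ∈ range d, ((N : ℝ) - j) := by
    have h1 : (Nat.factorial d) * N.choose d = N.descFactorial d :=
      (Nat.descFactorial_eq_factorial_mul_choose N d).symm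
    have h2 : ((N.descFactorial d : ℕ) : ℝ) = ∏ j ∈ range d, ((N : ℝ) - j) := by
      rw [Nat.descFactorial_eq_prod_range, Nat.cast_prod]
      refine Finset.prod_congr rfl fun j hj => ?_
      have hjd : j < d := Finset.mem_range.mp hj
      have : j ≤ N := le_trans hjd.le hdN
      push_cast [Nat.cast_sub this]
      ring
    rw [← h2, ← h1]
    push_cast
    ring
  -- key product bound
  have key : ∏ j ∈ range d, ((N : ℝ) - j) ≤
      (d : ℝ) ^ d * ((1 / ε + 1 / d) * (1 / ε) *
        ∏ k ∈ Icc 1 (d - 2), (1 / ε - (k : ℝ) / d)) := by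
    have step1 : ∏ j ∈ range d, ((N : ℝ) - j) ≤
        ∏ j ∈ range d, ((d : ℝ) * (1 / ε + (1 - (j : ℝ)) / d)) := by
      refine Finset.prod_le_prod (fun j hj => ?_) (fun j hj => ?_)
      · have hjd : j < d := Finset.mem_range.mp hj
        have : (j : ℝ) < (N : ℝ) := by exact_mod_cast lt_of_lt_of_le hjd hdN
        linarith
      · have : (d : ℝ) * (1 / ε + (1 - (j : ℝ)) / d) = (d : ℝ) / ε + 1 - j := by
          field_simp
          ring
        rw [this]; linarith
    refine step1.trans (le_of_eq ?_)
    rw [Finset.prod_mul_distrib, Finset.prod_const, Finset.card_range]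
    congr 1
    -- decompose the product
    obtain ⟨m, rfl⟩ : ∃ m, d = m + 2 := ⟨d - 2, by omega⟩
    rw [Finset.prod_range_succ', Finset.prod_range_succ']
    have hIcc : Icc 1 (m + 2 - 2) = Ico 1 (m + 1) := by
      rw [Finset.Ico_add_one_right_eq_Icc]; congr 1
    rw [hIcc, Finset.prod_Ico_eq_prod_range]
    simp only [Nat.add_sub_cancel]
    push_cast
    have heq : (∏ x ∈ range m, (1 / ε + (1 - ((x : ℝ) + 1 + 1)) / ((m : ℝ) + 2))) =
        ∏ x ∈ range m, (1 / ε - (1 + (x : ℝ)) / ((m : ℝ) + 2)) :=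
      Finset.prod_congr rfl (fun x _ => by ring)
    rw [heq]
    ring
  -- conclude
  rw [hdh]
  have hfac : (0 : ℝ) < (Nat.factorial d : ℝ) := by
    exact_mod_cast Nat.factorial_pos d
  rw [show ((d : ℝ) ^ d / (Nat.factorial d) * (1 / ε + 1 / d) * (1 / ε) *
        ∏ k ∈ Icc 1 (d - 2), (1 / ε - (k : ℝ) / d)) =
      ((d : ℝ) ^ d * ((1 / ε + 1 / d) * (1 / ε) *
        ∏ k ∈ Icc 1 (d - 2), (1 / ε - (k : ℝ) / d))) / (Nat.factorial d) by ring]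
  rw [le_div_iff₀ hfac]
  calc (N.choose d : ℝ) * (Nat.factorial d : ℝ) = ∏ j ∈ range d, ((N : ℝ) - j) := hdesc
    _ ≤ _ := key
end

section
/- Let ε ∈ (0,1). Then the bracketing number of the family C_2 of anchored boxes in [0,1]^2 satisfies N_[](ε, C_2, ‖·‖_{L¹}) ≤ 2·(1/ε + 1/2)·(1/ε); more precisely, there exists an ε-bracketing cover of C_2 consisting of pairs of anchored boxes whose cardinality is at most 2(1/ε + 1/2)(1/ε). -/
open Finset

/-- `B` is an `ε`-bracketing cover of the family `C_d` of anchored boxes in `[0,1]^d`: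
a finite set of pairs `(a, b)` of points of `[0,1]^d` with `a ≤ b` componentwise and
`∏ b_j - ∏ a_j ≤ ε` (i.e. the bracket `[1_{[0,a)}, 1_{[0,b)}]` has `L¹`-weight at most
`ε`), such that every anchored box `[0,x)` with `x ∈ [0,1]^d` satisfies
`a ≤ x ≤ b` componentwise for some `(a, b) ∈ B`. -/
def IsBracketingCoverC (d : ℕ) (ε : ℝ)
    (B : Finset ((Fin d → ℝ) × (Fin d → ℝ))) : Prop :=
  (∀ p ∈ B, p.1 ∈ Set.Icc (0 : Fin d → ℝ) 1 ∧ p.2 ∈ Set.Icc (0 : Fin d → ℝ) 1 ∧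
    p.1 ≤ p.2 ∧ (∏ j, p.2 j) - ∏ j, p.1 j ≤ ε) ∧
  ∀ x ∈ Set.Icc (0 : Fin d → ℝ) 1, ∃ p ∈ B, p.1 ≤ x ∧ x ≤ p.2

/-- The bracketing number `N_[](ε, C_d, ‖·‖_{L¹})` of the family of anchored boxes:
the minimal cardinality of an `ε`-bracketing cover of `C_d`. -/
noncomputable def bracketingNumberC (d : ℕ) (ε : ℝ) : ℕ :=
  sInf { n : ℕ | ∃ B : Finset ((Fin d → ℝ) × (Fin d → ℝ)),
    IsBracketingCoverC d ε B ∧ B.card = n }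

/-!
Cut `[0,1]²` into vertical strips `[a i, a (i+1)] × [0,1]`, `i < M`, and strip `i` into `n i`
brackets of height `1 / n i`. As `p'q' - pq ≤ (p' - p) + p (q' - q)`, each bracket of strip `i` has
weight at most `a (i+1) - a i + a i / n i`. With `a 0 = 0`, `a i = (i+1) ε / 2` (capped at `1`) and
`n i = i + 1` this is at most `ε`, and `M = ⌊2/ε⌋` strips reach `1`, so the cover has at most
`∑_{i<M} (i+1) = M (M+1) / 2 ≤ (2/ε) (2/ε + 1) / 2` brackets.
-/

theorem exists_lt_mem_Icc_succ_of_mem_Icc {α : Type*} [LinearOrder α] (a : ℕ → α) {x : α} :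
    ∀ {m : ℕ}, 0 < m → x ∈ Set.Icc (a 0) (a m) → ∃ i < m, x ∈ Set.Icc (a i) (a (i + 1))
  | m + 1, _, hx => by
    rcases Nat.eq_zero_or_pos m with rfl | hm
    · exact ⟨0, Nat.one_pos, hx⟩
    by_cases hxm : x ≤ a m
    · obtain ⟨i, hi, hxi⟩ := exists_lt_mem_Icc_succ_of_mem_Icc a hm ⟨hx.1, hxm⟩
      exact ⟨i, by omega, hxi⟩
    · exact ⟨m, Nat.lt_succ_self m, (not_le.1 hxm).le, hx.2⟩

theorem mul_sub_mul_le_of_le_of_le_one {p p' q q' : ℝ} (hp : p ≤ p') (hq' : q' ≤ 1) :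
    p' * q' - p * q ≤ (p' - p) + p * (q' - q) := by
  nlinarith [mul_nonneg (sub_nonneg.2 hp) (sub_nonneg.2 hq')]

noncomputable def stripBrackets (a : ℕ → ℝ) (n : ℕ → ℕ) (M : ℕ) :
    Finset ((Fin 2 → ℝ) × (Fin 2 → ℝ)) :=
  ((range M).sigma fun i => range (n i)).image fun q =>
    (![a q.1, q.2 / n q.1], ![a (q.1 + 1), (q.2 + 1) / n q.1])

theorem card_stripBrackets_le (a : ℕ → ℝ) (n : ℕ → ℕ) (M : ℕ) :
    (stripBrackets a n M).card ≤ ∑ i ∈ range M, n i :=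
  card_image_le.trans (by simp [card_sigma])

theorem isBracketingCoverC_stripBrackets {ε : ℝ} {a : ℕ → ℝ} {n : ℕ → ℕ} {M : ℕ}
    (ha : Monotone a) (ha0 : a 0 = 0) (haM : a M = 1) (hn : ∀ i < M, 0 < n i)
    (hweight : ∀ i < M, a (i + 1) - a i + a i / n i ≤ ε) :
    IsBracketingCoverC 2 ε (stripBrackets a n M) := by
  have ha_nonneg : ∀ i, 0 ≤ a i := fun i => ha0 ▸ ha (Nat.zero_le i)
  have ha_le_one : ∀ i ≤ M, a i ≤ 1 := fun i hi => haM ▸ ha hi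
  have hgrid : ∀ i < M, ∀ j ≤ n i, (j / n i : ℝ) ∈ Set.Icc 0 1 := fun i hi j hj =>
    ⟨by positivity, div_le_one_of_le₀ (by exact_mod_cast hj) (Nat.cast_nonneg _)⟩
  refine ⟨?_, fun x hx => ?_⟩
  · simp only [stripBrackets, mem_image, mem_sigma, mem_range]
    rintro _ ⟨⟨i, j⟩, ⟨hi, hj⟩, rfl⟩
    have hni : (0 : ℝ) < n i := by exact_mod_cast hn i hi
    have hlow := hgrid i hi j hj.le
    have hupp : ((j + 1 : ℕ) / n i : ℝ) ∈ Set.Icc 0 1 := hgrid i hi (j + 1) hj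
    push_cast at hupp
    have hstep : ((j : ℝ) + 1) / n i - j / n i = 1 / n i := by ring
    refine ⟨?_, ?_, ?_, ?_⟩
    · simp [Pi.le_def, Fin.forall_fin_two, ha_nonneg, ha_le_one i hi.le, hlow.1, hlow.2]
    · simp [Pi.le_def, Fin.forall_fin_two, ha_nonneg, ha_le_one (i + 1) hi, hupp.1, hupp.2]
    · simp only [Pi.le_def, Fin.forall_fin_two, Matrix.cons_val_zero, Matrix.cons_val_one]
      exact ⟨ha (Nat.le_succ i), by gcongr; linarith⟩
    · simp only [Fin.prod_univ_two, Matrix.cons_val_zero, Matrix.cons_val_one]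
      calc a (i + 1) * ((j + 1) / n i) - a i * (j / n i)
          ≤ (a (i + 1) - a i) + a i * (((j : ℝ) + 1) / n i - j / n i) :=
            mul_sub_mul_le_of_le_of_le_one (ha (Nat.le_succ i)) hupp.2
        _ = a (i + 1) - a i + a i / n i := by rw [hstep, mul_one_div]
        _ ≤ ε := hweight i hi
  · have hM : 0 < M := Nat.pos_of_ne_zero fun h => by simp [h, ha0] at haM
    obtain ⟨i, hi, hx0⟩ := exists_lt_mem_Icc_succ_of_mem_Icc a hM
      (x := x 0) ⟨ha0 ▸ hx.1 0, haM ▸ hx.2 0⟩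
    obtain ⟨j, hj, hx1⟩ := exists_lt_mem_Icc_succ_of_mem_Icc (fun j : ℕ => (j / n i : ℝ))
      (hn i hi) (x := x 1) ⟨by simpa using hx.1 1, by simpa [(hn i hi).ne'] using hx.2 1⟩
    refine ⟨_, mem_image_of_mem _ (a := (⟨i, j⟩ : (_ : ℕ) × ℕ)) (by simp [hi, hj]), ?_, ?_⟩
    · simp [Pi.le_def, Fin.forall_fin_two, hx0.1, hx1.1]
    · simpa [Pi.le_def, Fin.forall_fin_two, hx0.2] using hx1.2

noncomputable def stripEdge (ε : ℝ) (i : ℕ) : ℝ :=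
  if i = 0 then 0 else min 1 (ε * (i + 1) / 2)

theorem monotone_stripEdge {ε : ℝ} (hε : 0 ≤ ε) : Monotone (stripEdge ε) := by
  refine monotone_nat_of_le_succ fun i => ?_
  rcases i with _ | i
  · simp only [stripEdge, ↓reduceIte, zero_add, one_ne_zero, Nat.cast_one, le_inf_iff,
      zero_le_one, true_and]
    positivity
  · simp only [stripEdge, Nat.add_one_ne_zero, if_false]
    gcongr
    linarith

theorem stripEdge_floor {ε : ℝ} (hε : 0 < ε) (hε2 : ε ≤ 2) : stripEdge ε ⌊2 / ε⌋₊ = 1 := by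
  have hM : ⌊2 / ε⌋₊ ≠ 0 := (Nat.floor_pos.2 ((one_le_div hε).2 hε2)).ne'
  have hlt : 2 / ε < ⌊2 / ε⌋₊ + 1 := Nat.lt_floor_add_one _
  rw [stripEdge, if_neg hM, min_eq_left]
  rw [div_lt_iff₀ hε] at hlt
  linarith

theorem stripEdge_weight_le {ε : ℝ} (hε : 0 ≤ ε) (i : ℕ) :
    stripEdge ε (i + 1) - stripEdge ε i + stripEdge ε i / ((i + 1 : ℕ) : ℝ) ≤ ε := by
  rcases i with _ | i
  · simp only [stripEdge, zero_add, one_ne_zero, ↓reduceIte, Nat.cast_one, sub_zero, div_one,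
      add_zero, inf_le_iff]
    exact Or.inr (by linarith)
  · simp only [stripEdge, Nat.add_one_ne_zero, if_false]
    push_cast
    have hstep : min 1 (ε * (i + 1 + 1 + 1) / 2) ≤ min 1 (ε * (i + 1 + 1) / 2) + ε / 2 := by
      rw [show ε * (i + 1 + 1 + 1) / 2 = ε * (i + 1 + 1) / 2 + ε / 2 by ring]
      rw [← min_add_add_right]
      exact min_le_min (le_add_of_nonneg_right (by positivity)) le_rfl
    have hlast : min 1 (ε * (i + 1 + 1) / 2) / (i + 1 + 1) ≤ ε / 2 := by
      rw [div_le_iff₀ (by positivity)]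
      linarith [min_le_right 1 (ε * (i + 1 + 1) / 2)]
    linarith

theorem exists_isBracketingCoverC_two_card_le {ε : ℝ} (hε : 0 < ε) (hε2 : ε ≤ 2) :
    ∃ B : Finset ((Fin 2 → ℝ) × (Fin 2 → ℝ)), IsBracketingCoverC 2 ε B ∧
      (B.card : ℝ) ≤ 2 * (1 / ε + 1 / 2) * (1 / ε) := by
  set M := ⌊2 / ε⌋₊
  refine ⟨stripBrackets (stripEdge ε) (· + 1) M,
    isBracketingCoverC_stripBrackets (monotone_stripEdge hε.le) (by simp [stripEdge])
      (stripEdge_floor hε hε2) (fun i _ => i.succ_pos) (fun i _ => stripEdge_weight_le hε.le i),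
    ?_⟩
  have hcard : (stripBrackets (stripEdge ε) (· + 1) M).card * 2 ≤ (M + 1) * M := by
    have hgauss := sum_range_id_mul_two (M + 1)
    rw [sum_range_succ'] at hgauss
    have := card_stripBrackets_le (stripEdge ε) (· + 1) M
    simp only [add_zero, Nat.add_sub_cancel] at hgauss
    omega
  have hM : (M : ℝ) ≤ 2 / ε := Nat.floor_le (by positivity)
  have hbound : 2 * (1 / ε + 1 / 2) * (1 / ε) = (2 / ε + 1) * (2 / ε) / 2 := by ring
  rw [hbound, le_div_iff₀ two_pos]
  calc _ ≤ ((M + 1) * M : ℝ) := by exact_mod_cast hcard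
    _ ≤ (2 / ε + 1) * (2 / ε) := by gcongr

theorem bracketingNumberC_le_card {d : ℕ} {ε : ℝ} {B : Finset ((Fin d → ℝ) × (Fin d → ℝ))}
    (hB : IsBracketingCoverC d ε B) : bracketingNumberC d ε ≤ B.card :=
  Nat.sInf_le ⟨B, hB, rfl⟩

/-- Bound (2.10) for `d = 2`: the bracketing number of the family `C_2` of anchored boxes
in `[0,1]^2` satisfies `N_[](ε, C_2, ‖·‖_{L¹}) ≤ 2 (1/ε + 1/2) (1/ε)`; more precisely,
there is an `ε`-bracketing cover of `C_2` of cardinality at most `2 (1/ε + 1/2) (1/ε)`. -/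
theorem bracketingNumberC_two_le (ε : ℝ) (hε : ε ∈ Set.Ioo (0 : ℝ) 1) :
    (bracketingNumberC 2 ε : ℝ) ≤ 2 * (1 / ε + 1 / 2) * (1 / ε) ∧
    ∃ B : Finset ((Fin 2 → ℝ) × (Fin 2 → ℝ)), IsBracketingCoverC 2 ε B ∧
      (B.card : ℝ) ≤ 2 * (1 / ε + 1 / 2) * (1 / ε) := by
  obtain ⟨B, hB, hcard⟩ := exists_isBracketingCoverC_two_card_le hε.1 (by linarith [hε.2])
  exact ⟨(Nat.cast_le.2 (bracketingNumberC_le_card hB)).trans hcard, B, hB, hcard⟩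
end

section
/- Let d ∈ ℕ with d ≥ 3 and ε ∈ (0,1). Then the bracketing number of the family C_d of anchored boxes in [0,1]^d satisfies N_[](ε, C_d, ‖·‖_{L¹}) ≤ (d^d/d!) · (1/ε − (1/2)·(1 − 3/d))^d ≤ (d^d/d!) · ε^{−d}; more precisely, there exists an ε-bracketing cover of C_d consisting of pairs of anchored boxes whose cardinality is at most (d^d/d!)·(1/ε − (1/2)(1 − 3/d))^d. -/
open Finset

private lemma neg_pow_le_self {x : ℝ} (hx : 0 ≤ x) (n : ℕ) : (-x)^n ≤ x^n := by
  rcases Nat.even_or_odd n with h | h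
  · rw [h.neg_pow]
  · rw [h.neg_pow]
    have : 0 ≤ x^n := pow_nonneg hx n
    linarith

/-- Midpoint Hermite–Hadamard for `t ^ n`, via binomial expansion. -/
private lemma midpoint_pow (m h : ℝ) (hh : 0 ≤ h) (hm : h ≤ m) (n : ℕ) :
    2*((n:ℝ)+1)*h*m^n ≤ (m+h)^(n+1) - (m-h)^(n+1) := by
  have hm0 : 0 ≤ m := le_trans hh hm
  have key : (m+h)^(n+1) - (m-h)^(n+1)
      = ∑ k ∈ range (n+2), m^k * (h^(n+1-k) - (-h)^(n+1-k)) * ((n+1).choose k : ℝ) := by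
    have h1 : m - h = m + (-h) := by ring
    rw [h1, add_pow, add_pow, ← Finset.sum_sub_distrib]
    exact Finset.sum_congr rfl (fun k _ => by ring)
  rw [key]
  have hterm : ∀ k ∈ range (n+2),
      0 ≤ m^k * (h^(n+1-k) - (-h)^(n+1-k)) * ((n+1).choose k : ℝ) := by
    intro k _
    have h2 : 0 ≤ h^(n+1-k) - (-h)^(n+1-k) := sub_nonneg.mpr (neg_pow_le_self hh _)
    positivity
  have hmem : n ∈ range (n+2) := mem_range.mpr (by omega)
  have := Finset.single_le_sum hterm hmem
  refine le_trans (le_of_eq ?_) this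
  have h3 : n+1-n = 1 := by omega
  rw [h3, Nat.choose_succ_self_right]
  push_cast
  ring

private lemma fact_le_pow : ∀ n : ℕ, 2^n * (n.factorial : ℝ) ≤ ((n:ℝ)+1)^n := by
  intro n
  induction n with
  | zero => norm_num
  | succ n ih =>
    have hp : (0:ℝ) < (n:ℝ)+1 := by positivity
    have hb : (2:ℝ) ≤ (1 + 1/((n:ℝ)+1))^(n+1) := by
      have h0 : (0:ℝ) ≤ 1/((n:ℝ)+1) := by positivity
      have h1 : (-2:ℝ) ≤ 1/((n:ℝ)+1) := by linarith
      have := one_add_mul_le_pow h1 (n+1)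
      have h2 : 1 + ((n+1:ℕ):ℝ) * (1/((n:ℝ)+1)) = 2 := by push_cast; field_simp; norm_num
      linarith
    have hb2 : 2*((n:ℝ)+1)^(n+1) ≤ ((n:ℝ)+2)^(n+1) := by
      have h4 : (1 + 1/((n:ℝ)+1))^(n+1) * ((n:ℝ)+1)^(n+1) = ((n:ℝ)+2)^(n+1) := by
        rw [← mul_pow]; congr 1; field_simp; ring
      nlinarith [pow_pos hp (n+1)]
    have hfs : ((n+1).factorial : ℝ) = ((n:ℝ)+1) * (n.factorial : ℝ) := by
      rw [Nat.factorial_succ]; push_cast; ring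
    calc 2^(n+1) * ((n+1).factorial : ℝ) = 2*((n:ℝ)+1) * (2^n * n.factorial) := by
          rw [hfs]; ring
      _ ≤ 2*((n:ℝ)+1) * ((n:ℝ)+1)^n := by
          have : (0:ℝ) ≤ 2*((n:ℝ)+1) := by positivity
          exact mul_le_mul_of_nonneg_left ih this
      _ = 2*((n:ℝ)+1)^(n+1) := by ring
      _ ≤ ((n:ℝ)+2)^(n+1) := hb2
      _ = (((n+1:ℕ):ℝ)+1) ^ (n+1) := by push_cast; ring

private lemma snoc_le_snoc {n : ℕ} {g h : Fin n → ℝ} {v w : ℝ}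
    (hgh : g ≤ h) (hvw : v ≤ w) : (Fin.snoc g v : Fin (n+1) → ℝ) ≤ Fin.snoc h w := by
  rw [Pi.le_def]
  intro j
  refine Fin.lastCases ?_ (fun k => ?_) j
  · simpa using hvw
  · simpa using hgh k

private lemma zero_eq_snoc (n : ℕ) : (0 : Fin (n+1) → ℝ) = Fin.snoc (0 : Fin n → ℝ) 0 := by
  funext j; refine Fin.lastCases ?_ (fun k => ?_) j <;> simp

private lemma one_eq_snoc (n : ℕ) : (1 : Fin (n+1) → ℝ) = Fin.snoc (1 : Fin n → ℝ) 1 := by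
  funext j; refine Fin.lastCases ?_ (fun k => ?_) j <;> simp

private lemma snoc_mem_Icc {n : ℕ} {g : Fin n → ℝ} {v : ℝ}
    (hg : g ∈ Set.Icc (0 : Fin n → ℝ) 1) (hv0 : 0 ≤ v) (hv1 : v ≤ 1) :
    Fin.snoc g v ∈ Set.Icc (0 : Fin (n+1) → ℝ) 1 := by
  rw [Set.mem_Icc] at hg ⊢
  constructor
  · rw [zero_eq_snoc n]; exact snoc_le_snoc hg.1 hv0
  · rw [one_eq_snoc n]; exact snoc_le_snoc hg.2 hv1

private lemma coverC_one (ε : ℝ) (hε0 : 0 < ε) (hε1 : ε < 1) :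
    ∃ B : Finset ((Fin 1 → ℝ) × (Fin 1 → ℝ)), IsBracketingCoverC 1 ε B ∧
      (B.card : ℝ) ≤ 1/ε + 1 := by
  set K := ⌈1/ε⌉₊ with hK
  have hKpos : 1 ≤ K := Nat.one_le_ceil_iff.mpr (by positivity)
  have hKlt : (K:ℝ) < 1/ε + 1 := Nat.ceil_lt_add_one (by positivity)
  have hKge : 1/ε ≤ (K:ℝ) := Nat.le_ceil _
  refine ⟨(Finset.range K).image
    (fun i : ℕ => ((fun _ : Fin 1 => max (1-((i:ℝ)+1)*ε) 0), (fun _ : Fin 1 => 1 - (i:ℝ)*ε))), ⟨?_, ?_⟩, ?_⟩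
  · intro p hp
    obtain ⟨i, hi, rfl⟩ := Finset.mem_image.mp hp
    have hiK : (i:ℝ) < 1/ε := Nat.lt_ceil.mp (Finset.mem_range.mp hi)
    have hiε : (i:ℝ)*ε < 1 := by
      calc (i:ℝ)*ε < (1/ε)*ε := mul_lt_mul_of_pos_right hiK hε0
        _ = 1 := by field_simp
    refine ⟨Set.mem_Icc.mpr ⟨?_, ?_⟩, Set.mem_Icc.mpr ⟨?_, ?_⟩, ?_, ?_⟩
    · intro j; exact le_max_right _ _
    · intro j
      simp only
      apply max_le (by nlinarith) zero_le_one
    · intro j; simp only [Pi.zero_apply]; linarith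
    · intro j; simp only [Pi.one_apply]; nlinarith
    · intro j
      simp only
      apply max_le (by nlinarith) (by linarith)
    · simp only [Fin.prod_univ_one]
      have := le_max_left (1-((i:ℝ)+1)*ε) 0
      nlinarith
  · intro x hx
    rw [Set.mem_Icc] at hx
    have hx0 : (0:ℝ) ≤ x 0 := hx.1 0
    have hx1 : x 0 ≤ 1 := hx.2 0
    have hje : ∀ j : Fin 1, x j = x 0 := fun j => by rw [Fin.eq_zero j]
    set i := ⌊(1 - x 0)/ε⌋₊ with hi
    have hfl : (i:ℝ) ≤ (1 - x 0)/ε := Nat.floor_le (div_nonneg (by linarith) hε0.le)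
    have hfl2 : (1 - x 0)/ε < (i:ℝ) + 1 := Nat.lt_floor_add_one _
    have hup : (i:ℝ)*ε ≤ 1 - x 0 := by
      rw [le_div_iff₀ hε0] at hfl; exact hfl
    have hlow : 1 - x 0 < ((i:ℝ)+1)*ε := by
      rw [div_lt_iff₀ hε0] at hfl2; exact hfl2
    by_cases hiK : i < K
    · refine ⟨_, Finset.mem_image.mpr ⟨i, Finset.mem_range.mpr hiK, rfl⟩, ?_, ?_⟩
      · intro j; simp only
        rw [hje j]
        exact max_le (by linarith) hx0
      · intro j; simp only
        rw [hje j]; linarith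
    · push_neg at hiK
      have hKi : (K:ℝ) ≤ (i:ℝ) := by exact_mod_cast hiK
      have h1K : (1:ℝ) ≤ (K:ℝ)*ε := by
        calc (1:ℝ) = (1/ε)*ε := by field_simp
          _ ≤ (K:ℝ)*ε := mul_le_mul_of_nonneg_right hKge hε0.le
      have hxK : x 0 ≤ 1 - (K:ℝ)*ε := by nlinarith
      refine ⟨_, Finset.mem_image.mpr ⟨K-1, Finset.mem_range.mpr (Nat.sub_lt hKpos Nat.one_pos), rfl⟩, ?_, ?_⟩
      · intro j; simp only
        rw [hje j]
        have hcast : ((K-1:ℕ):ℝ) = (K:ℝ) - 1 := by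
          push_cast [Nat.cast_sub hKpos]; ring
        rw [hcast]
        apply max_le (by nlinarith) hx0
      · intro j; simp only
        rw [hje j]
        have hcast : ((K-1:ℕ):ℝ) = (K:ℝ) - 1 := by
          push_cast [Nat.cast_sub hKpos]; ring
        rw [hcast]
        nlinarith
  · calc ((Finset.card _ : ℕ) : ℝ) ≤ ((Finset.range K).card : ℝ) := by
          exact_mod_cast Finset.card_image_le
      _ = (K:ℝ) := by rw [Finset.card_range]
      _ ≤ 1/ε + 1 := hKlt.le

set_option maxHeartbeats 2000000 in
private lemma coverC_exists : ∀ d : ℕ, 1 ≤ d → ∀ ε : ℝ, 0 < ε → ε < 1 →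
    ∃ B : Finset ((Fin d → ℝ) × (Fin d → ℝ)), IsBracketingCoverC d ε B ∧
      (B.card : ℝ) ≤ (d:ℝ)^d / (d.factorial : ℝ) * (1/ε - 1/2*(1-3/(d:ℝ)))^d := by
  intro d
  induction d with
  | zero => omega
  | succ n IH =>
    intro _ ε hε0 hε1
    rcases Nat.eq_zero_or_pos n with rfl | hn
    · obtain ⟨B, hB, hc⟩ := coverC_one ε hε0 hε1
      refine ⟨B, hB, ?_⟩
      norm_num
      rw [one_div] at hc
      linarith
    · -- main recursive step, dimension n+1 with n ≥ 1
      classical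
      have hn1 : (1:ℝ) ≤ (n:ℝ) := by exact_mod_cast hn
      have hnR : (0:ℝ) < (n:ℝ) := by linarith
      obtain ⟨e, he⟩ : ∃ e : ℝ, e = (n:ℝ) + 1 := ⟨_, rfl⟩
      have he0 : (0:ℝ) < e := by rw [he]; linarith
      have he1 : (1:ℝ) < e := by rw [he]; linarith
      obtain ⟨δ, hδ⟩ : ∃ δ : ℝ, δ = ε/e := ⟨_, rfl⟩
      have hδ0 : 0 < δ := by rw [hδ]; exact div_pos hε0 he0
      have hδε : δ < ε := by rw [hδ]; exact div_lt_self hε0 he1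
      have hεδ : (0:ℝ) < ε - δ := by linarith
      obtain ⟨c, hc⟩ : ∃ c : ℝ, c = 1/2*(1 - 3/(n:ℝ)) := ⟨_, rfl⟩
      obtain ⟨A, hA⟩ : ∃ A : ℝ, A = e/((n:ℝ)*ε) - c := ⟨_, rfl⟩
      obtain ⟨z, hzdef⟩ : ∃ z : ℕ → ℝ, z = fun i : ℕ => 1 - (i:ℝ)*δ := ⟨_, rfl⟩
      obtain ⟨R, hR⟩ : ∃ R : ℝ, R = (1-ε)/δ := ⟨_, rfl⟩
      have hR0 : 0 < R := by rw [hR]; exact div_pos (by linarith) hδ0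
      obtain ⟨S, hS⟩ : ∃ S : ℕ, S = ⌈R⌉₊ := ⟨_, rfl⟩
      have hS1 : 1 ≤ S := by rw [hS]; exact Nat.one_le_ceil_iff.mpr hR0
      have hSltR : (S:ℝ) < R + 1 := by rw [hS]; exact Nat.ceil_lt_add_one hR0.le
      have hRS : R ≤ (S:ℝ) := by rw [hS]; exact Nat.le_ceil R
      have hzS_le : z S ≤ ε := by
        have h1 : 1 - ε ≤ (S:ℝ)*δ := by
          rw [hR, div_le_iff₀ hδ0] at hRS; linarith
        simp only [hzdef]; linarith
      have hz_gt : ∀ i, i < S → ε - δ < z (i+1) := by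
        intro i hi
        have hiR : (i:ℝ) < R := by
          rw [hS] at hi; exact Nat.lt_ceil.mp hi
        rw [hR, lt_div_iff₀ hδ0] at hiR
        simp only [hzdef]; push_cast; nlinarith
      have hSpred : S - 1 + 1 = S := Nat.succ_pred_eq_of_pos hS1
      have hzS0 : 0 < z S := by
        have h := hz_gt (S-1) (by omega)
        rw [hSpred] at h
        linarith
      have hz_le_one : ∀ i : ℕ, z i ≤ 1 := by
        intro i; simp only [hzdef]
        have : (0:ℝ) ≤ (i:ℝ)*δ := by positivity
        linarith
      have hz_mono : ∀ i j : ℕ, i ≤ j → z j ≤ z i := by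
        intro i j hij; simp only [hzdef]
        have h : (i:ℝ) ≤ (j:ℝ) := by exact_mod_cast hij
        nlinarith
      have hz_step : ∀ i : ℕ, z i - z (i+1) = δ := by
        intro i; simp only [hzdef]; push_cast; ring
      obtain ⟨εf, hεf⟩ : ∃ εf : ℕ → ℝ, εf = fun i : ℕ => (ε - δ)/z (i+1) := ⟨_, rfl⟩
      have hεf0 : ∀ i, i < S → 0 < εf i := by
        intro i hi
        have := hz_gt i hi
        simp only [hεf]
        exact div_pos hεδ (by linarith)
      have hεf1 : ∀ i, i < S → εf i < 1 := by
        intro i hi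
        have h1 := hz_gt i hi
        simp only [hεf]
        rw [div_lt_one (by linarith)]
        exact h1
      obtain ⟨M, hM⟩ : ∃ M : ℕ → ℝ, M = fun i : ℕ => A - ((i:ℝ)+1)/(n:ℝ) := ⟨_, rfl⟩
      obtain ⟨U, hU⟩ : ∃ U : ℕ → ℝ, U = fun i : ℕ => A - ((i:ℝ)+1/2)/(n:ℝ) := ⟨_, rfl⟩
      have hMU1 : ∀ i : ℕ, M i + 1/(2*(n:ℝ)) = U i := by
        intro i; simp only [hM, hU]; field_simp; ring
      have hMU2 : ∀ i : ℕ, M i - 1/(2*(n:ℝ)) = U (i+1) := by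
        intro i; simp only [hM, hU]; push_cast; field_simp; ring
      have hMval : ∀ i : ℕ, i < S → 1/(εf i) - c = M i := by
        intro i _
        have key : z (i+1) = (ε-δ)*(e/((n:ℝ)*ε) - ((i:ℝ)+1)/(n:ℝ)) := by
          simp only [hzdef, hδ, he]; push_cast; field_simp; ring
        simp only [hεf, hM, hA]
        rw [one_div_div, key, mul_div_cancel_left₀ _ (ne_of_gt hεδ)]
        ring
      have hUS : ((n:ℝ)+2)/(2*(n:ℝ)) ≤ U S := by
        have hR2 : R = e/ε - e := by rw [hR, hδ]; field_simp
        have h1 : (S:ℝ) < e/ε - e + 1 := by rw [hR2] at hSltR; linarith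
        have h3 : A - (e/ε - e + 1 + 1/2)/(n:ℝ) = ((n:ℝ)+2)/(2*(n:ℝ)) := by
          rw [hA, hc, he]; field_simp; ring
        have h4 : ((S:ℝ)+1/2)/(n:ℝ) ≤ (e/ε - e + 1 + 1/2)/(n:ℝ) :=
          (div_le_div_iff_of_pos_right hnR).mpr (by linarith)
        simp only [hU]; linarith
      have hUS0 : (0:ℝ) ≤ U S := le_trans (by positivity) hUS
      have hUmono : ∀ a b : ℕ, a ≤ b → U b ≤ U a := by
        intro a b hab
        simp only [hU]
        have h : (a:ℝ) ≤ (b:ℝ) := by exact_mod_cast hab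
        have h2 : ((a:ℝ)+1/2)/(n:ℝ) ≤ ((b:ℝ)+1/2)/(n:ℝ) :=
          (div_le_div_iff_of_pos_right hnR).mpr (by linarith)
        linarith
      -- sub-covers from the induction hypothesis
      have hex : ∀ i : ℕ, ∃ Bi : Finset ((Fin n → ℝ) × (Fin n → ℝ)),
          i < S → IsBracketingCoverC n (εf i) Bi ∧
            (Bi.card : ℝ) ≤ (n:ℝ)^n/(n.factorial : ℝ) * (M i)^n := by
        intro i
        by_cases hi : i < S
        · obtain ⟨Bi, h1, h2⟩ := IH hn (εf i) (hεf0 i hi) (hεf1 i hi)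
          refine ⟨Bi, fun _ => ⟨h1, ?_⟩⟩
          rw [← hc] at h2
          rw [← hMval i hi]
          exact h2
        · exact ⟨∅, fun h' => absurd h' hi⟩
      choose f hf using hex
      obtain ⟨Bot, hBot⟩ : ∃ Bot : (Fin (n+1) → ℝ) × (Fin (n+1) → ℝ),
          Bot = ((0 : Fin (n+1) → ℝ), Fin.snoc (1 : Fin n → ℝ) (z S)) := ⟨_, rfl⟩
      obtain ⟨B, hB⟩ : ∃ B : Finset ((Fin (n+1) → ℝ) × (Fin (n+1) → ℝ)),
          B = ((Finset.range S).biUnion (fun i => (f i).image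
            (fun p => (Fin.snoc p.1 (z (i+1)), Fin.snoc p.2 (z i))))) ∪ {Bot} := ⟨_, rfl⟩
      refine ⟨B, ⟨?_, ?_⟩, ?_⟩
      · -- bracket properties
        intro p hp
        rw [hB, Finset.mem_union] at hp
        rcases hp with hp | hp
        · rw [Finset.mem_biUnion] at hp
          obtain ⟨i, hiS, hp⟩ := hp
          rw [Finset.mem_image] at hp
          obtain ⟨q, hq, rfl⟩ := hp
          have hiS' : i < S := Finset.mem_range.mp hiS
          obtain ⟨hq1, hq2, hq12, hqw⟩ := (hf i hiS').1.1 q hq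
          have hz1pos : 0 < z (i+1) := lt_trans hεδ (hz_gt i hiS')
          have hz0pos : 0 < z i := lt_of_lt_of_le hz1pos (hz_mono i (i+1) (by omega))
          refine ⟨snoc_mem_Icc hq1 hz1pos.le (hz_le_one _), snoc_mem_Icc hq2 hz0pos.le (hz_le_one _),
            snoc_le_snoc hq12 (hz_mono i (i+1) (by omega)), ?_⟩
          simp only [Fin.prod_snoc]
          rw [Set.mem_Icc] at hq2
          have hprodb1 : ∏ j, q.2 j ≤ 1 :=
            Finset.prod_le_one (fun j _ => hq2.1 j) (fun j _ => hq2.2 j)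
          have hw2 : z (i+1) * ((∏ j, q.2 j) - (∏ j, q.1 j)) ≤ ε - δ := by
            have h2 : ((∏ j, q.2 j) - (∏ j, q.1 j)) ≤ (ε - δ)/z (i+1) := by
              have := hqw; simp only [hεf] at this; exact this
            calc z (i+1) * ((∏ j, q.2 j) - (∏ j, q.1 j)) ≤ z (i+1) * ((ε - δ)/z (i+1)) :=
                  mul_le_mul_of_nonneg_left h2 hz1pos.le
              _ = ε - δ := by rw [mul_comm, div_mul_cancel₀ _ (ne_of_gt hz1pos)]
          have hzi : z i = z (i+1) + δ := by linarith [hz_step i]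
          rw [hzi]
          have e1 : (∏ j, q.2 j) * (z (i+1) + δ) - (∏ j, q.1 j) * z (i+1)
              = z (i+1)*((∏ j, q.2 j) - (∏ j, q.1 j)) + δ*(∏ j, q.2 j) := by ring
          have e2 : δ*(∏ j, q.2 j) ≤ δ*1 := mul_le_mul_of_nonneg_left hprodb1 hδ0.le
          linarith [hw2, e2, e1]
        · rw [Finset.mem_singleton] at hp
          subst hp
          rw [hBot]
          have hIcc1 : (1 : Fin n → ℝ) ∈ Set.Icc (0 : Fin n → ℝ) 1 :=
            Set.mem_Icc.mpr ⟨zero_le_one, le_refl _⟩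
          refine ⟨?_, ?_, ?_, ?_⟩
          · exact Set.mem_Icc.mpr ⟨le_refl _, zero_le_one⟩
          · exact snoc_mem_Icc hIcc1 hzS0.le (hz_le_one _)
          · simp only
            rw [zero_eq_snoc n]
            exact snoc_le_snoc zero_le_one hzS0.le
          · simp only [Fin.prod_snoc, Pi.one_apply, Pi.zero_apply, Finset.prod_const,
              one_pow, zero_pow (Nat.succ_ne_zero n), Finset.prod_const_one]
            simpa using hzS_le
      · -- covering property
        intro x hx
        rw [Set.mem_Icc, Pi.le_def, Pi.le_def] at hx
        by_cases hcase : x (Fin.last n) ≤ z S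
        · refine ⟨Bot, ?_, ?_, ?_⟩
          · rw [hB]; exact Finset.mem_union_right _ (Finset.mem_singleton_self _)
          · rw [hBot]; rw [Pi.le_def]; intro j; exact hx.1 j
          · rw [hBot]
            simp only
            conv_lhs => rw [← Fin.snoc_init_self x]
            refine snoc_le_snoc ?_ hcase
            rw [Pi.le_def]; intro k
            simpa [Fin.init] using hx.2 (Fin.castSucc k)
        · push_neg at hcase
          have hPex : ∃ j, z (j+1) ≤ x (Fin.last n) := by
            refine ⟨S-1, ?_⟩
            rw [hSpred]
            exact hcase.le
          have hjspec : z (Nat.find hPex + 1) ≤ x (Fin.last n) := Nat.find_spec hPex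
          set j := Nat.find hPex with hj
          have hjle : j ≤ S-1 := Nat.find_min' hPex
            (by rw [hSpred]; exact hcase.le)
          have hjS : j < S := by omega
          have hjt : x (Fin.last n) ≤ z j := by
            rcases Nat.eq_zero_or_pos j with h0 | hpos
            · rw [h0]
              have h1 : z 0 = 1 := by simp [hzdef]
              rw [h1]; exact hx.2 _
            · have hjpred : j - 1 + 1 = j := Nat.succ_pred_eq_of_pos hpos
              have hmin := Nat.find_min hPex (show j-1 < j by omega)
              rw [hjpred] at hmin
              push_neg at hmin
              exact hmin.le
          have hyI : Fin.init x ∈ Set.Icc (0 : Fin n → ℝ) 1 := by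
            rw [Set.mem_Icc]
            constructor
            · rw [Pi.le_def]; intro k
              simpa [Fin.init] using hx.1 (Fin.castSucc k)
            · rw [Pi.le_def]; intro k
              simpa [Fin.init] using hx.2 (Fin.castSucc k)
          obtain ⟨q, hqB, hq1, hq2⟩ := (hf j hjS).1.2 (Fin.init x) hyI
          refine ⟨(Fin.snoc q.1 (z (j+1)), Fin.snoc q.2 (z j)), ?_, ?_, ?_⟩
          · rw [hB]
            apply Finset.mem_union_left
            rw [Finset.mem_biUnion]
            exact ⟨j, Finset.mem_range.mpr hjS, Finset.mem_image.mpr ⟨q, hqB, rfl⟩⟩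
          · conv_rhs => rw [← Fin.snoc_init_self x]
            exact snoc_le_snoc hq1 hjspec
          · conv_lhs => rw [← Fin.snoc_init_self x]
            exact snoc_le_snoc hq2 hjt
      · -- cardinality bound
        obtain ⟨ψ, hψ⟩ : ∃ ψ : ℕ → ℝ,
            ψ = fun i : ℕ => (n:ℝ)^(n+1)/((n+1).factorial : ℝ) * (U i)^(n+1) := ⟨_, rfl⟩
        have hfactpos : (0:ℝ) < ((n+1).factorial : ℝ) := by
          exact_mod_cast (n+1).factorial_pos
        have hfactn : ((n+1).factorial : ℝ) = ((n:ℝ)+1) * (n.factorial : ℝ) := by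
          rw [Nat.factorial_succ]; push_cast; ring
        have hfactnpos : (0:ℝ) < (n.factorial : ℝ) := by exact_mod_cast n.factorial_pos
        have hterm : ∀ i, i < S → (n:ℝ)^n/(n.factorial : ℝ) * (M i)^n ≤ ψ i - ψ (i+1) := by
          intro i hi
          have hU1 : 0 ≤ U (i+1) := le_trans hUS0 (hUmono (i+1) S (by omega))
          have hmge : 1/(2*(n:ℝ)) ≤ M i := by
            have h := hMU2 i; linarith
          have hmid := midpoint_pow (M i) (1/(2*(n:ℝ))) (by positivity) hmge n
          rw [hMU1 i, hMU2 i] at hmid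
          have hconst : (0:ℝ) ≤ (n:ℝ)^(n+1)/((n+1).factorial : ℝ) := by positivity
          have hmul := mul_le_mul_of_nonneg_left hmid hconst
          calc (n:ℝ)^n/(n.factorial : ℝ) * (M i)^n
              = (n:ℝ)^(n+1)/((n+1).factorial : ℝ) * (2*((n:ℝ)+1)*(1/(2*(n:ℝ)))*(M i)^n) := by
                rw [hfactn]; field_simp; ring
            _ ≤ (n:ℝ)^(n+1)/((n+1).factorial : ℝ) * ((U i)^(n+1) - (U (i+1))^(n+1)) := hmul
            _ = ψ i - ψ (i+1) := by simp only [hψ]; ring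
        have hψS : 1 ≤ ψ S := by
          have h1 : ((n:ℝ)+2)/2 ≤ (n:ℝ) * U S := by
            rw [div_le_iff₀ (by positivity : (0:ℝ) < 2)]
            rw [div_le_iff₀ (by positivity : (0:ℝ) < 2*(n:ℝ))] at hUS
            nlinarith [hUS]
          have h2 : (((n:ℝ)+2)/2)^(n+1) ≤ ((n:ℝ) * U S)^(n+1) :=
            pow_le_pow_left₀ (by positivity) h1 (n+1)
          have h3 := fact_le_pow (n+1)
          have h4 : ((n+1).factorial : ℝ) ≤ (((n:ℝ)+2)/2)^(n+1) := by
            rw [div_pow, le_div_iff₀ (by positivity : (0:ℝ) < 2^(n+1))]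
            push_cast at h3 ⊢
            rw [show (n:ℝ)+1+1 = (n:ℝ)+2 by ring] at h3
            linarith
          simp only [hψ]
          calc (1:ℝ) = ((n+1).factorial : ℝ)/((n+1).factorial : ℝ) := by field_simp
            _ ≤ ((n:ℝ) * U S)^(n+1)/((n+1).factorial : ℝ) :=
                (div_le_div_iff_of_pos_right hfactpos).mpr (le_trans h4 h2)
            _ = (n:ℝ)^(n+1)/((n+1).factorial : ℝ) * (U S)^(n+1) := by
                rw [mul_pow]; ring
        have hψ0 : ψ 0 = (((n+1):ℕ):ℝ)^(n+1)/(((n+1).factorial : ℕ) : ℝ)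
            * (1/ε - 1/2*(1-3/(((n+1):ℕ):ℝ)))^(n+1) := by
          have hkey : (n:ℝ) * U 0 = e * (1/ε - 1/2*(1-3/e)) := by
            simp only [hU, hA, hc, he]
            push_cast
            field_simp
            ring
          have hpow : (n:ℝ)^(n+1) * (U 0)^(n+1) = e^(n+1) * (1/ε - 1/2*(1-3/e))^(n+1) := by
            rw [← mul_pow, ← mul_pow, hkey]
          have hc2 : (((n+1):ℕ):ℝ) = e := by push_cast; rw [he]
          simp only [hψ, hc2]
          rw [div_mul_eq_mul_div, div_mul_eq_mul_div, hpow]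
        have hcount1 : B.card ≤ (∑ i ∈ Finset.range S, (f i).card) + 1 := by
          rw [hB]
          refine le_trans (Finset.card_union_le _ _) ?_
          simp only [Finset.card_singleton]
          refine add_le_add ?_ le_rfl
          refine le_trans (Finset.card_biUnion_le) ?_
          exact Finset.sum_le_sum (fun i _ => Finset.card_image_le)
        have hBR : (B.card : ℝ) ≤ (∑ i ∈ Finset.range S, ((f i).card : ℝ)) + 1 := by
          have h := (Nat.cast_le (α := ℝ)).mpr hcount1
          push_cast at h
          exact h
        have hsum : (∑ i ∈ Finset.range S, ((f i).card : ℝ)) ≤ ψ 0 - ψ S := by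
          calc ∑ i ∈ Finset.range S, ((f i).card : ℝ)
              ≤ ∑ i ∈ Finset.range S, ((n:ℝ)^n/(n.factorial : ℝ) * (M i)^n) :=
                Finset.sum_le_sum (fun i hi => (hf i (Finset.mem_range.mp hi)).2)
            _ ≤ ∑ i ∈ Finset.range S, (ψ i - ψ (i+1)) :=
                Finset.sum_le_sum (fun i hi => hterm i (Finset.mem_range.mp hi))
            _ = ψ 0 - ψ S := Finset.sum_range_sub' ψ S
        calc (B.card : ℝ) ≤ (ψ 0 - ψ S) + 1 := by linarith
          _ ≤ ψ 0 := by linarith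
          _ = _ := hψ0

/-- The main bound (2.11) for `d ≥ 3`: the bracketing number of the family `C_d` of
anchored boxes in `[0,1]^d` satisfies
`N_[](ε, C_d, ‖·‖_{L¹}) ≤ (d^d/d!) (1/ε - (1/2)(1 - 3/d))^d ≤ (d^d/d!) ε^{-d}`;
more precisely, there is an `ε`-bracketing cover of `C_d` of cardinality at most
`(d^d/d!) (1/ε - (1/2)(1 - 3/d))^d`. -/
theorem bracketingNumberC_le (d : ℕ) (hd : 3 ≤ d) (ε : ℝ) (hε : ε ∈ Set.Ioo (0 : ℝ) 1) :
    (bracketingNumberC d ε : ℝ) ≤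
      (d : ℝ) ^ d / (Nat.factorial d) * (1 / ε - 1 / 2 * (1 - 3 / d)) ^ d ∧
    (d : ℝ) ^ d / (Nat.factorial d) * (1 / ε - 1 / 2 * (1 - 3 / d)) ^ d ≤
      (d : ℝ) ^ d / (Nat.factorial d) * (1 / ε) ^ d ∧
    ∃ B : Finset ((Fin d → ℝ) × (Fin d → ℝ)), IsBracketingCoverC d ε B ∧
      (B.card : ℝ) ≤ (d : ℝ) ^ d / (Nat.factorial d) * (1 / ε - 1 / 2 * (1 - 3 / d)) ^ d := by
  obtain ⟨hε0, hε1⟩ := hε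
  obtain ⟨B, hB, hcard⟩ := coverC_exists d (by omega) ε hε0 hε1
  have h1 : (bracketingNumberC d ε : ℝ) ≤ (B.card : ℝ) := by
    have hmem : B.card ∈ { n : ℕ | ∃ B : Finset ((Fin d → ℝ) × (Fin d → ℝ)),
        IsBracketingCoverC d ε B ∧ B.card = n } := ⟨B, hB, rfl⟩
    have h : bracketingNumberC d ε ≤ B.card := Nat.sInf_le hmem
    exact_mod_cast h
  have hdR : (3:ℝ) ≤ (d:ℝ) := by exact_mod_cast hd
  have hd0 : (0:ℝ) < (d:ℝ) := by linarith
  have hc0 : 0 ≤ 1/2*(1-3/(d:ℝ)) := by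
    have h2 : 3/(d:ℝ) ≤ 1 := by
      rw [div_le_one hd0]; linarith
    linarith
  have h1ε : (1:ℝ) < 1/ε := by
    rw [lt_div_iff₀ hε0]; linarith
  have hsub : (0:ℝ) ≤ 1/ε - 1/2*(1-3/(d:ℝ)) := by
    have h3 : 1/2*(1-3/(d:ℝ)) ≤ 1/2 := by
      have : (0:ℝ) < 3/(d:ℝ) := by positivity
      linarith
    linarith
  refine ⟨le_trans h1 hcard, ?_, ⟨B, hB, hcard⟩⟩
  apply mul_le_mul_of_nonneg_left _ (by positivity)
  exact pow_le_pow_left₀ hsub (by linarith) d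
end

section
/- Let d ∈ ℕ with d ≥ 3 and ε ∈ (0,1). Then the bracketing number of the family R_d of all half-open axis-parallel boxes in [0,1]^d satisfies N_[](ε, R_d, ‖·‖_{L¹}) ≤ ((d^d/d!) · (2/ε)^d)² = (d^d/d!)² · 2^{2d} · ε^{−2d}. -/
open Finset MeasureTheory

/-- The half-open axis-parallel box `[y, z) = ∏_j [y_j, z_j)` in `ℝ^d`. -/
def box (d : ℕ) (y z : Fin d → ℝ) : Set (Fin d → ℝ) :=
  Set.univ.pi fun j => Set.Ico (y j) (z j)

/-- `B` is an `ε`-bracketing cover of the family `R_d` of half-open boxes in `[0,1]^d`: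
a finite set of pairs of boxes `(R⁻, R⁺)` (given by their corner points in `[0,1]^d`)
with `R⁻ ⊆ R⁺` and `λ^d(R⁺) - λ^d(R⁻) ≤ ε`, such that every box `[y, z)` with
`y, z ∈ [0,1]^d` satisfies `R⁻ ⊆ [y, z) ⊆ R⁺` for some pair in `B`. -/
def IsBracketingCoverR (d : ℕ) (ε : ℝ)
    (B : Finset (((Fin d → ℝ) × (Fin d → ℝ)) × ((Fin d → ℝ) × (Fin d → ℝ)))) : Prop :=
  (∀ p ∈ B, p.1.1 ∈ Set.Icc (0 : Fin d → ℝ) 1 ∧ p.1.2 ∈ Set.Icc (0 : Fin d → ℝ) 1 ∧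
    p.2.1 ∈ Set.Icc (0 : Fin d → ℝ) 1 ∧ p.2.2 ∈ Set.Icc (0 : Fin d → ℝ) 1 ∧
    box d p.1.1 p.1.2 ⊆ box d p.2.1 p.2.2 ∧
    (volume (box d p.2.1 p.2.2)).toReal - (volume (box d p.1.1 p.1.2)).toReal ≤ ε) ∧
  ∀ y z : Fin d → ℝ, y ∈ Set.Icc (0 : Fin d → ℝ) 1 → z ∈ Set.Icc (0 : Fin d → ℝ) 1 →
    ∃ p ∈ B, box d p.1.1 p.1.2 ⊆ box d y z ∧ box d y z ⊆ box d p.2.1 p.2.2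

/-- The bracketing number `N_[](ε, R_d, ‖·‖_{L¹})` of the family of half-open boxes in
`[0,1]^d`: the minimal cardinality of an `ε`-bracketing cover of `R_d`. -/
noncomputable def bracketingNumberR (d : ℕ) (ε : ℝ) : ℕ :=
  sInf { n : ℕ | ∃ B : Finset (((Fin d → ℝ) × (Fin d → ℝ)) × ((Fin d → ℝ) × (Fin d → ℝ))),
    IsBracketingCoverR d ε B ∧ B.card = n }

/-!
A box `[y, z)` is bracketed by combining a bracket `[0, a) ⊆ [0, z) ⊆ [0, b)` of the anchored
box `[0, z)` with a bracket of the anchored box `[0, 1 - y)`, reflected through the centre of the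
cube. The two volume defects add up, so an `ε/2`-bracketing of the anchored boxes with `N`
brackets yields an `ε`-bracketing of `R_d` with `N²` brackets.

Anchored brackets are built by induction on the dimension: cut the last coordinate into slabs
`[1 - (k+1)h, 1 - kh]` of width `h = δ/d`, bracket the first `d - 1` coordinates in slab `k` with
accuracy `(δ - h)/(1 - (k+1)h)`, and cover the bottom slab `[0, 1 - Mh]` by a single bracket.
The count `d^d/d! · (1/δ + (3-d)/(2d))^d` survives the induction step because the sum over the
slabs is a midpoint Riemann sum of `x ↦ x^(d-1)`, hence at most the integral, and the bottom
bracket is paid for by `2^d d! ≤ (d+1)^d`.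
-/

open scoped Nat

theorem prod_sub_prod_le_prod_sub_prod {ι : Type*} (s : Finset ι) {f g F G : ι → ℝ}
    (hg : ∀ i ∈ s, 0 ≤ g i) (hgf : ∀ i ∈ s, g i ≤ f i) (hgG : ∀ i ∈ s, g i ≤ G i)
    (hsub : ∀ i ∈ s, f i - g i ≤ F i - G i) :
    ∏ i ∈ s, f i - ∏ i ∈ s, g i ≤ ∏ i ∈ s, F i - ∏ i ∈ s, G i := by
  induction s using Finset.cons_induction with
  | empty => simp
  | cons a s _ ih =>
    simp only [forall_mem_cons] at hg hgf hgG hsub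
    have hf : ∀ i ∈ s, 0 ≤ f i := fun i hi => (hg.2 i hi).trans (hgf.2 i hi)
    have hfF : ∏ i ∈ s, f i ≤ ∏ i ∈ s, F i :=
      prod_le_prod hf fun i hi => by linarith [hgG.2 i hi, hsub.2 i hi]
    have hgf' : ∏ i ∈ s, g i ≤ ∏ i ∈ s, f i := prod_le_prod hg.2 hgf.2
    have ih' := ih hg.2 hgf.2 hgG.2 hsub.2
    rw [prod_cons, prod_cons, prod_cons, prod_cons]
    calc f a * ∏ i ∈ s, f i - g a * ∏ i ∈ s, g i
        = (f a - g a) * ∏ i ∈ s, f i + g a * (∏ i ∈ s, f i - ∏ i ∈ s, g i) := by ring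
      _ ≤ (F a - G a) * ∏ i ∈ s, F i + G a * (∏ i ∈ s, F i - ∏ i ∈ s, G i) := by
        have hfg : 0 ≤ f a - g a := sub_nonneg.2 hgf.1
        exact add_le_add (mul_le_mul hsub.1 hfF (prod_nonneg hf) (hfg.trans hsub.1))
          (mul_le_mul hgG.1 ih' (sub_nonneg.2 hgf') (hg.1.trans hgG.1))
      _ = F a * ∏ i ∈ s, F i - G a * ∏ i ∈ s, G i := by ring

theorem prod_max_add_sub_one_sub_le {ι : Type*} [Fintype ι] {a b c : ι → ℝ}
    (ha : 0 ≤ a) (hab : a ≤ b) (hc : c ≤ 1) :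
    ∏ i, max (b i + c i - 1) 0 - ∏ i, max (a i + c i - 1) 0 ≤ ∏ i, b i - ∏ i, a i := by
  refine prod_sub_prod_le_prod_sub_prod _ (fun _ _ => le_max_right _ _)
    (fun i _ => max_le_max_right _ (by linarith [hab i])) (fun i _ => ?_) (fun i _ => ?_)
  · have hci : c i ≤ 1 := hc i
    exact max_le (by linarith) (ha i)
  · have := abs_max_sub_max_le_abs (b i + c i - 1) (a i + c i - 1) 0
    rw [abs_of_nonneg (by linarith [hab i] : 0 ≤ b i + c i - 1 - (a i + c i - 1))] at this
    linarith [le_abs_self (max (b i + c i - 1) 0 - max (a i + c i - 1) 0)]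

theorem prod_max_add_sub_one_sub_prod_max_le {ι : Type*} [Fintype ι] {a b a' b' : ι → ℝ}
    (ha : 0 ≤ a) (hab : a ≤ b) (hb : b ≤ 1) (ha' : 0 ≤ a') (hab' : a' ≤ b') (hb' : b' ≤ 1) :
    ∏ i, max (b i + b' i - 1) 0 - ∏ i, max (a i + a' i - 1) 0 ≤
      (∏ i, b i - ∏ i, a i) + (∏ i, b' i - ∏ i, a' i) := by
  have h₁ := prod_max_add_sub_one_sub_le ha hab hb'
  have h₂ := prod_max_add_sub_one_sub_le (c := a) ha' hab' (hab.trans hb)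
  simp only [add_comm (a' _), add_comm (b' _)] at h₂
  linarith

theorem mul_pow_le_add_pow_sub_sub_pow (n : ℕ) {u e : ℝ} (hu : 0 ≤ u) (he : 0 ≤ e) :
    (n + 1) * (2 * e) * u ^ n ≤ (u + e) ^ (n + 1) - (u - e) ^ (n + 1) := by
  rw [add_pow, sub_eq_add_neg u e, add_pow, ← sum_sub_distrib]
  have hterm : ∀ k ∈ range (n + 2), 0 ≤ u ^ k * e ^ (n + 1 - k) * (n + 1).choose k -
      u ^ k * (-e) ^ (n + 1 - k) * (n + 1).choose k := by
    intro k _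
    have : (-e) ^ (n + 1 - k) ≤ e ^ (n + 1 - k) := by
      rcases Nat.even_or_odd (n + 1 - k) with hk | hk
      · rw [hk.neg_pow]
      · rw [hk.neg_pow]; linarith [pow_nonneg he (n + 1 - k)]
    rw [← sub_mul, ← mul_sub]
    have := pow_nonneg hu k
    positivity
  refine le_trans (le_of_eq ?_) (single_le_sum hterm (mem_range.2 (by omega : n < n + 2)))
  rw [Nat.choose_succ_self_right, show n + 1 - n = 1 by omega]
  push_cast
  ring

theorem succ_mul_sum_pow_le (n M : ℕ) {c h : ℝ} (hh : 0 ≤ h) (hc : M * h ≤ c) :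
    (n + 1) * h * ∑ k ∈ range M, (c - (k + 1) * h) ^ n ≤
      (c - h / 2) ^ (n + 1) - (c - M * h - h / 2) ^ (n + 1) := by
  have hstep : ∀ k ∈ range M, (n + 1) * h * (c - (k + 1) * h) ^ n ≤
      (c - k * h - h / 2) ^ (n + 1) - (c - (k + 1 : ℕ) * h - h / 2) ^ (n + 1) := by
    intro k hk
    have hk' : (k : ℝ) + 1 ≤ M := by exact_mod_cast mem_range.1 hk
    have hu : 0 ≤ c - (k + 1) * h := by nlinarith
    have key := mul_pow_le_add_pow_sub_sub_pow n hu (by linarith : (0 : ℝ) ≤ h / 2)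
    rw [show c - (k + 1) * h + h / 2 = c - k * h - h / 2 by ring,
      show c - (k + 1) * h - h / 2 = c - (k + 1 : ℕ) * h - h / 2 by push_cast; ring] at key
    linarith
  calc (n + 1) * h * ∑ k ∈ range M, (c - (k + 1) * h) ^ n
      ≤ ∑ k ∈ range M,
          ((c - k * h - h / 2) ^ (n + 1) - (c - (k + 1 : ℕ) * h - h / 2) ^ (n + 1)) := by
        rw [mul_sum]; exact sum_le_sum hstep
    _ = (c - h / 2) ^ (n + 1) - (c - M * h - h / 2) ^ (n + 1) := by
        rw [sum_range_sub' (fun k : ℕ => (c - k * h - h / 2) ^ (n + 1))]; simp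

theorem Nat.two_pow_mul_factorial_le_succ_pow (n : ℕ) : 2 ^ n * n ! ≤ (n + 1) ^ n := by
  induction n with
  | zero => simp
  | succ n ih =>
    have bernoulli :=
      pow_add_mul_le_add_pow (a := n + 1) (b := 1) (Nat.zero_le _) (by omega) (n + 1)
    rw [Nat.add_sub_cancel] at bernoulli
    calc 2 ^ (n + 1) * (n + 1)! = 2 * (n + 1) * (2 ^ n * n !) := by
          rw [Nat.factorial_succ]; ring
      _ ≤ 2 * (n + 1) * (n + 1) ^ n := Nat.mul_le_mul_left _ ih
      _ = (n + 1) ^ (n + 1) + (n + 1) * (n + 1) ^ n * 1 := by ring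
      _ ≤ (n + 1 + 1) ^ (n + 1) := bernoulli

theorem one_le_pow_div_factorial_mul_pow (n : ℕ) :
    1 ≤ (n : ℝ) ^ n / n ! * ((n + 1) / (2 * n)) ^ n := by
  obtain rfl | hn := eq_or_ne n 0
  · simp
  have : (n : ℝ) ^ n / n ! * ((n + 1) / (2 * n)) ^ n = (n + 1) ^ n / (2 ^ n * n !) := by
    rw [div_pow, mul_pow]
    field_simp
  rw [this, one_le_div (by positivity)]
  exact_mod_cast Nat.two_pow_mul_factorial_le_succ_pow n

theorem ceil_div_mul_mem_Ico {x h : ℝ} (hx : 0 ≤ x) (hh : 0 < h) :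
    ⌈x / h⌉₊ * h ∈ Set.Ico x (x + h) := by
  constructor
  · rw [← div_le_iff₀ hh]; exact Nat.le_ceil _
  · have := Nat.ceil_lt_add_one (div_nonneg hx hh.le)
    rwa [← lt_div_iff₀ hh, add_div, div_self hh.ne']

theorem exists_lt_mem_Icc_sub_mul {h t : ℝ} {M : ℕ} (hh : 0 < h) (ht : t ≤ 1)
    (hMt : 1 - M * h < t) : ∃ k < M, t ∈ Set.Icc (1 - (k + 1) * h) (1 - k * h) := by
  have hq : 0 ≤ (1 - t) / h := div_nonneg (by linarith) hh.le
  refine ⟨⌊(1 - t) / h⌋₊, ?_, ?_, ?_⟩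
  · rw [Nat.floor_lt hq, div_lt_iff₀ hh]; linarith
  · have := Nat.lt_floor_add_one ((1 - t) / h)
    rw [div_lt_iff₀ hh] at this; linarith
  · have := Nat.floor_le hq
    rw [le_div_iff₀ hh] at this; linarith

section Anchored

variable {ι : Type*} [Fintype ι]

/-- `(a, b)` encodes the bracket `[0, a) ⊆ [0, b)` of anchored boxes; `∏ b - ∏ a` is its volume
defect. -/
def IsAnchoredBracket (δ : ℝ) (p : (ι → ℝ) × (ι → ℝ)) : Prop :=
  0 ≤ p.1 ∧ p.1 ≤ p.2 ∧ p.2 ≤ 1 ∧ ∏ i, p.2 i - ∏ i, p.1 i ≤ δ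

structure IsAnchoredBracketing (δ : ℝ) (A : Finset ((ι → ℝ) × (ι → ℝ))) : Prop where
  isAnchoredBracket : ∀ p ∈ A, IsAnchoredBracket δ p
  exists_le_le : ∀ x, 0 ≤ x → x ≤ 1 → ∃ p ∈ A, p.1 ≤ x ∧ x ≤ p.2

theorem IsAnchoredBracket.mono {δ δ' : ℝ} {p : (ι → ℝ) × (ι → ℝ)} (hp : IsAnchoredBracket δ p)
    (hδ : δ ≤ δ') : IsAnchoredBracket δ' p :=
  ⟨hp.1, hp.2.1, hp.2.2.1, hp.2.2.2.trans hδ⟩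

theorem isAnchoredBracketing_singleton_zero [IsEmpty ι] {δ : ℝ} (hδ : 0 ≤ δ) :
    IsAnchoredBracketing δ {((0 : ι → ℝ), (0 : ι → ℝ))} where
  isAnchoredBracket p hp := by
    rw [mem_singleton.1 hp]
    exact ⟨le_rfl, le_rfl, fun i => isEmptyElim i, by simpa using hδ⟩
  exists_le_le _ _ _ :=
    ⟨(0, 0), mem_singleton_self _, fun i => isEmptyElim i, fun i => isEmptyElim i⟩

end Anchored

section Layers

variable {m : ℕ}

theorem Fin.snoc_le_snoc_iff {α : Type*} [LE α] {a b : Fin m → α} {s t : α} :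
    (Fin.snoc a s : Fin (m + 1) → α) ≤ Fin.snoc b t ↔ a ≤ b ∧ s ≤ t := by
  simp only [Pi.le_def, Fin.forall_fin_succ', Fin.snoc_castSucc, Fin.snoc_last]

theorem Fin.snoc_zero_zero {α : Type*} [Zero α] : (Fin.snoc 0 0 : Fin (m + 1) → α) = 0 := by
  ext i; refine Fin.lastCases ?_ (fun j => ?_) i <;> simp

theorem Fin.snoc_one_one {α : Type*} [One α] : (Fin.snoc 1 1 : Fin (m + 1) → α) = 1 := by
  ext i; refine Fin.lastCases ?_ (fun j => ?_) i <;> simp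

def extendLast (s t : ℝ) (p : (Fin m → ℝ) × (Fin m → ℝ)) :
    (Fin (m + 1) → ℝ) × (Fin (m + 1) → ℝ) :=
  (Fin.snoc p.1 s, Fin.snoc p.2 t)

theorem IsAnchoredBracket.extendLast {δ s t : ℝ} {p : (Fin m → ℝ) × (Fin m → ℝ)}
    (hp : IsAnchoredBracket δ p) (hs : 0 ≤ s) (hst : s ≤ t) (ht : t ≤ 1) :
    IsAnchoredBracket (s * δ + (t - s)) (extendLast s t p) := by
  obtain ⟨h₀, hle, h₁, hδ⟩ := hp
  refine ⟨?_, Fin.snoc_le_snoc_iff.2 ⟨hle, hst⟩, ?_, ?_⟩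
  · rw [← Fin.snoc_zero_zero]; exact Fin.snoc_le_snoc_iff.2 ⟨h₀, hs⟩
  · rw [← Fin.snoc_one_one]; exact Fin.snoc_le_snoc_iff.2 ⟨h₁, ht⟩
  · have hprod : ∏ i, p.2 i ≤ 1 :=
      prod_le_one (fun i _ => (h₀ i).trans (hle i)) fun i _ => h₁ i
    simp only [_root_.extendLast, Fin.prod_snoc]
    calc (∏ i, p.2 i) * t - (∏ i, p.1 i) * s
        = s * (∏ i, p.2 i - ∏ i, p.1 i) + (t - s) * ∏ i, p.2 i := by ring
      _ ≤ s * δ + (t - s) * 1 := by gcongr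
      _ = s * δ + (t - s) := by ring

noncomputable def layered (h : ℝ) (M : ℕ) (A : ℕ → Finset ((Fin m → ℝ) × (Fin m → ℝ))) :
    Finset ((Fin (m + 1) → ℝ) × (Fin (m + 1) → ℝ)) :=
  insert (0, Fin.snoc 1 (1 - M * h))
    ((range M).biUnion fun k => (A k).image (extendLast (1 - (k + 1) * h) (1 - k * h)))

theorem card_layered_le (h : ℝ) (M : ℕ) (A : ℕ → Finset ((Fin m → ℝ) × (Fin m → ℝ))) :
    (layered h M A).card ≤ 1 + ∑ k ∈ range M, (A k).card :=
  calc (layered h M A).card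
      ≤ ((range M).biUnion fun k => (A k).image (extendLast (1 - (k + 1) * h) (1 - k * h))).card
        + 1 := card_insert_le _ _
    _ ≤ (∑ k ∈ range M, (A k).card) + 1 := by
      gcongr; exact card_biUnion_le.trans (sum_le_sum fun _ _ => card_image_le)
    _ = 1 + ∑ k ∈ range M, (A k).card := add_comm _ _

theorem isAnchoredBracketing_layered {δ h : ℝ} {M : ℕ} {δ' : ℕ → ℝ}
    {A : ℕ → Finset ((Fin m → ℝ) × (Fin m → ℝ))} (hh : 0 < h) (hM₀ : 0 ≤ 1 - M * h)
    (hM : 1 - M * h ≤ δ) (hA : ∀ k < M, IsAnchoredBracketing (δ' k) (A k))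
    (hδ' : ∀ k < M, (1 - (k + 1) * h) * δ' k + h ≤ δ) :
    IsAnchoredBracketing δ (layered h M A) where
  isAnchoredBracket p hp := by
    rcases mem_insert.1 hp with rfl | hp
    · have : (0 : ℝ) ≤ M * h := by positivity
      refine ⟨le_rfl, ?_, ?_, by simpa [Fin.prod_snoc] using hM⟩
      · rw [← Fin.snoc_zero_zero]; exact Fin.snoc_le_snoc_iff.2 ⟨zero_le_one, hM₀⟩
      · rw [← Fin.snoc_one_one]; exact Fin.snoc_le_snoc_iff.2 ⟨le_rfl, by linarith⟩
    · obtain ⟨k, hk, hp⟩ := mem_biUnion.1 hp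
      obtain ⟨q, hq, rfl⟩ := mem_image.1 hp
      have hk' : (k : ℝ) + 1 ≤ M := by exact_mod_cast mem_range.1 hk
      have : (0 : ℝ) ≤ k * h := by positivity
      refine ((hA k (mem_range.1 hk)).isAnchoredBracket q hq |>.extendLast ?_ ?_ ?_).mono ?_
      · nlinarith
      · linarith
      · linarith
      · linarith [hδ' k (mem_range.1 hk)]
  exists_le_le x hx₀ hx₁ := by
    rw [← Fin.snoc_init_self x, ← Fin.snoc_zero_zero, Fin.snoc_le_snoc_iff] at hx₀
    rw [← Fin.snoc_init_self x, ← Fin.snoc_one_one, Fin.snoc_le_snoc_iff] at hx₁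
    rw [← Fin.snoc_init_self x]
    rcases le_or_gt (x (Fin.last m)) (1 - M * h) with hlow | hhigh
    · refine ⟨_, mem_insert_self _ _, ?_, Fin.snoc_le_snoc_iff.2 ⟨hx₁.1, hlow⟩⟩
      rw [← Fin.snoc_zero_zero, Fin.snoc_le_snoc_iff]; exact hx₀
    · obtain ⟨k, hk, hlo, hhi⟩ := exists_lt_mem_Icc_sub_mul hh hx₁.2 hhigh
      obtain ⟨q, hq, hq₁, hq₂⟩ := (hA k hk).exists_le_le _ hx₀.1 hx₁.1
      exact ⟨extendLast _ _ q,
        mem_insert_of_mem (mem_biUnion.2 ⟨k, mem_range.2 hk, mem_image_of_mem _ hq⟩),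
        Fin.snoc_le_snoc_iff.2 ⟨hq₁, hlo⟩, Fin.snoc_le_snoc_iff.2 ⟨hq₂, hhi⟩⟩

end Layers

noncomputable def anchoredBound (d : ℕ) (δ : ℝ) : ℝ :=
  (d : ℝ) ^ d / d ! * (1 / δ + (3 - d) / (2 * d)) ^ d

theorem anchoredBound_div (m : ℕ) {a : ℝ} (ha : a ≠ 0) (t : ℝ) :
    anchoredBound m (a / t) = (m : ℝ) ^ m / m ! / a ^ m * (t + (3 - m) / (2 * m) * a) ^ m := by
  rw [anchoredBound, one_div_div, div_add' _ _ _ ha, div_pow]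
  ring

theorem one_add_sum_anchoredBound_le {m M : ℕ} (hm : 1 ≤ m) {δ : ℝ} (hδ : 0 < δ)
    (hM : M * (δ / (m + 1)) < 1 - δ + δ / (m + 1)) :
    1 + ∑ k ∈ range M, anchoredBound m ((δ - δ / (m + 1)) / (1 - (k + 1) * (δ / (m + 1))))
      ≤ anchoredBound (m + 1) δ := by
  set h := δ / (m + 1) with hh_def
  have hh : 0 < h := by positivity
  have ha : δ - h = δ * m / (m + 1) := by rw [hh_def]; field_simp; ring
  have hapos : 0 < δ - h := by rw [ha]; positivity
  set γ := (3 - m) / (2 * m) * (δ - h) with hγ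
  set Q := ((m + 1 : ℕ) : ℝ) ^ (m + 1) / (m + 1)! / δ ^ (m + 1) with hQ
  have hcoef : (m : ℝ) ^ m / m ! / (δ - h) ^ m = Q * ((m + 1) * h) := by
    rw [ha, hQ, hh_def, Nat.factorial_succ, div_pow, mul_pow]
    push_cast
    field_simp
    ring
  have hterm : ∀ k : ℕ, anchoredBound m ((δ - h) / (1 - (k + 1) * h)) =
      Q * ((m + 1) * h) * (1 + γ - (k + 1) * h) ^ m := by
    intro k
    rw [anchoredBound_div m hapos.ne', ← hγ, hcoef]
    ring
  have hMc : M * h ≤ 1 + γ := by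
    have hc : (3 - (m : ℝ)) / (2 * m) + 1 = (m + 3) / (2 * m) := by field_simp; ring
    have : 0 ≤ ((3 - m) / (2 * m) + 1) * (δ - h) := by rw [hc]; positivity
    rw [hγ]; linarith
  have htop : Q * (1 + γ - h / 2) ^ (m + 1) = anchoredBound (m + 1) δ := by
    have hbase : 1 + γ - h / 2 =
        δ * (1 / δ + (3 - ((m + 1 : ℕ) : ℝ)) / (2 * ((m + 1 : ℕ) : ℝ))) := by
      rw [hγ, ha, hh_def]; push_cast; field_simp; ring
    rw [hbase, mul_pow, hQ, anchoredBound]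
    field_simp
  have hbot : 1 ≤ Q * (1 + γ - M * h - h / 2) ^ (m + 1) := by
    have hp : γ + δ - 3 / 2 * h = δ * ((m + 2) / (2 * (m + 1))) := by
      rw [hγ, ha, hh_def]; field_simp; ring
    calc (1 : ℝ) ≤ ((m + 1 : ℕ) : ℝ) ^ (m + 1) / (m + 1)! *
          ((((m + 1 : ℕ) : ℝ) + 1) / (2 * ((m + 1 : ℕ) : ℝ))) ^ (m + 1) :=
          one_le_pow_div_factorial_mul_pow (m + 1)
      _ = Q * (δ * ((m + 2) / (2 * (m + 1)))) ^ (m + 1) := by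
          rw [hQ, mul_pow]; push_cast; field_simp; ring
      _ ≤ Q * (1 + γ - M * h - h / 2) ^ (m + 1) := by gcongr; linarith
  calc 1 + ∑ k ∈ range M, anchoredBound m ((δ - h) / (1 - (k + 1) * h))
      = 1 + Q * ((m + 1) * h * ∑ k ∈ range M, (1 + γ - (k + 1) * h) ^ m) := by
        simp only [hterm, mul_sum, mul_assoc]
    _ ≤ 1 + Q * ((1 + γ - h / 2) ^ (m + 1) - (1 + γ - M * h - h / 2) ^ (m + 1)) := by
        gcongr; exact succ_mul_sum_pow_le m M hh.le hMc
    _ ≤ anchoredBound (m + 1) δ := by rw [mul_sub, htop]; linarith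

theorem anchoredBound_le {d : ℕ} (hd : 3 ≤ d) {δ : ℝ} (hδ : 0 < δ) (hδ1 : δ ≤ 1) :
    anchoredBound d δ ≤ (d : ℝ) ^ d / d ! * (1 / δ) ^ d := by
  have hd' : (3 : ℝ) ≤ d := by exact_mod_cast hd
  have hc₀ : (3 - (d : ℝ)) / (2 * d) ≤ 0 :=
    div_nonpos_of_nonpos_of_nonneg (by linarith) (by positivity)
  have hc₁ : -1 ≤ (3 - (d : ℝ)) / (2 * d) := by rw [le_div_iff₀ (by positivity)]; linarith
  have hδ' : 1 ≤ 1 / δ := one_le_one_div hδ hδ1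
  unfold anchoredBound
  gcongr
  · linarith
  · linarith

theorem exists_isAnchoredBracketing_one {δ : ℝ} (hδ : 0 < δ) (hδ1 : δ ≤ 1) :
    ∃ A : Finset ((Fin 1 → ℝ) × (Fin 1 → ℝ)),
      IsAnchoredBracketing δ A ∧ (A.card : ℝ) ≤ anchoredBound 1 δ := by
  set M := ⌈(1 - δ) / δ⌉₊
  obtain ⟨hM₁, hM₂⟩ := ceil_div_mul_mem_Ico (sub_nonneg.2 hδ1) hδ
  refine ⟨layered (m := 0) δ M fun _ => {(0, 0)},
    isAnchoredBracketing_layered hδ (by linarith) (by linarith)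
      (fun _ _ => isAnchoredBracketing_singleton_zero le_rfl) (fun _ _ => by simp), ?_⟩
  have hcard : ((layered (m := 0) δ M fun _ => {(0, 0)}).card : ℝ) ≤ 1 + M := by
    exact_mod_cast (card_layered_le δ M _).trans_eq (by simp)
  have hMδ : (M : ℝ) ≤ 1 / δ := by rw [le_div_iff₀ hδ]; linarith
  have hbound : anchoredBound 1 δ = 1 / δ + 1 := by norm_num [anchoredBound]
  rw [hbound]
  linarith

theorem exists_isAnchoredBracketing_succ {m : ℕ} (hm : 1 ≤ m)
    (ih : ∀ δ : ℝ, 0 < δ → δ ≤ 1 → ∃ A : Finset ((Fin m → ℝ) × (Fin m → ℝ)),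
      IsAnchoredBracketing δ A ∧ (A.card : ℝ) ≤ anchoredBound m δ)
    {δ : ℝ} (hδ : 0 < δ) (hδ1 : δ ≤ 1) :
    ∃ A : Finset ((Fin (m + 1) → ℝ) × (Fin (m + 1) → ℝ)),
      IsAnchoredBracketing δ A ∧ (A.card : ℝ) ≤ anchoredBound (m + 1) δ := by
  set h := δ / (m + 1)
  set M := ⌈(1 - δ) / h⌉₊
  have hh : 0 < h := by positivity
  have hhδ : h < δ := div_lt_self hδ (by norm_cast; omega)
  obtain ⟨hM₁, hM₂⟩ := ceil_div_mul_mem_Ico (sub_nonneg.2 hδ1) hh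
  have hslab : ∀ k < M, δ - h < 1 - (k + 1) * h := fun k hk => by
    have : ((k : ℝ) + 1) * h ≤ M * h := by gcongr; exact_mod_cast hk
    linarith
  have hδ' : ∀ k < M, 0 < (δ - h) / (1 - (k + 1) * h) ∧ (δ - h) / (1 - (k + 1) * h) ≤ 1 :=
    fun k hk => ⟨div_pos (by linarith) (by linarith [hslab k hk]),
      (div_le_one (by linarith [hslab k hk])).2 (hslab k hk).le⟩
  choose! A hA hcard using fun k (hk : k < M) => ih _ (hδ' k hk).1 (hδ' k hk).2
  refine ⟨layered h M A, isAnchoredBracketing_layered hh (by linarith) (by linarith) hA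
    (fun k hk => ?_), ?_⟩
  · rw [mul_div_cancel₀ _ (by linarith [hslab k hk])]; linarith
  · calc ((layered h M A).card : ℝ) ≤ 1 + ∑ k ∈ range M, ((A k).card : ℝ) := by
          exact_mod_cast card_layered_le h M A
      _ ≤ 1 + ∑ k ∈ range M, anchoredBound m ((δ - h) / (1 - (k + 1) * h)) := by
          gcongr with k hk; exact hcard k (mem_range.1 hk)
      _ ≤ anchoredBound (m + 1) δ := one_add_sum_anchoredBound_le hm hδ (by linarith)

theorem exists_isAnchoredBracketing {d : ℕ} (hd : 1 ≤ d) {δ : ℝ} (hδ : 0 < δ) (hδ1 : δ ≤ 1) :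
    ∃ A : Finset ((Fin d → ℝ) × (Fin d → ℝ)),
      IsAnchoredBracketing δ A ∧ (A.card : ℝ) ≤ anchoredBound d δ := by
  induction d, hd using Nat.le_induction generalizing δ with
  | base => exact exists_isAnchoredBracketing_one hδ hδ1
  | succ m hm ih => exact exists_isAnchoredBracketing_succ hm (fun _ => ih) hδ hδ1

theorem volume_box_toReal (d : ℕ) (y z : Fin d → ℝ) :
    (volume (box d y z)).toReal = ∏ j, max (z j - y j) 0 := by
  simp only [_root_.box, Real.volume_pi_Ico, ENNReal.toReal_prod, ENNReal.toReal_ofReal']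

theorem box_subset_box {d : ℕ} {y z y' z' : Fin d → ℝ} (hy : y' ≤ y) (hz : z ≤ z') :
    box d y z ⊆ box d y' z' :=
  Set.pi_mono fun j _ => Set.Ico_subset_Ico (hy j) (hz j)

def boxBracket {d : ℕ} (p q : (Fin d → ℝ) × (Fin d → ℝ)) :
    ((Fin d → ℝ) × (Fin d → ℝ)) × ((Fin d → ℝ) × (Fin d → ℝ)) :=
  ((1 - q.1, p.1), (1 - q.2, p.2))

theorem IsAnchoredBracketing.isBracketingCoverR {d : ℕ} {ε : ℝ}
    {A : Finset ((Fin d → ℝ) × (Fin d → ℝ))} (hA : IsAnchoredBracketing (ε / 2) A) :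
    IsBracketingCoverR d ε ((A ×ˢ A).image fun pq => boxBracket pq.1 pq.2) := by
  constructor
  · intro b hb
    obtain ⟨⟨p, q⟩, hpq, rfl⟩ := mem_image.1 hb
    obtain ⟨hp₀, hp, hp₁, hpε⟩ := hA.isAnchoredBracket p (mem_product.1 hpq).1
    obtain ⟨hq₀, hq, hq₁, hqε⟩ := hA.isAnchoredBracket q (mem_product.1 hpq).2
    refine ⟨⟨sub_nonneg.2 (hq.trans hq₁), sub_le_self _ hq₀⟩, ⟨hp₀, hp.trans hp₁⟩,
      ⟨sub_nonneg.2 hq₁, sub_le_self _ (hq₀.trans hq)⟩, ⟨hp₀.trans hp, hp₁⟩,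
      box_subset_box (sub_le_sub_left hq 1) hp, ?_⟩
    have := prod_max_add_sub_one_sub_prod_max_le hp₀ hp hp₁ hq₀ hq hq₁
    simp only [volume_box_toReal, boxBracket, Pi.sub_apply, Pi.one_apply, sub_sub_eq_add_sub]
    linarith
  · intro y z hy hz
    obtain ⟨p, hp, hpz, hzp⟩ := hA.exists_le_le z hz.1 hz.2
    obtain ⟨q, hq, hqy, hyq⟩ := hA.exists_le_le (1 - y) (sub_nonneg.2 hy.2) (sub_le_self _ hy.1)
    exact ⟨boxBracket p q, mem_image_of_mem _ (mk_mem_product hp hq),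
      box_subset_box (le_sub_comm.1 hqy) hpz, box_subset_box (sub_le_comm.1 hyq) hzp⟩

theorem bracketingNumberR_le_card {d : ℕ} {ε : ℝ}
    {B : Finset (((Fin d → ℝ) × (Fin d → ℝ)) × ((Fin d → ℝ) × (Fin d → ℝ)))}
    (hB : IsBracketingCoverR d ε B) : bracketingNumberR d ε ≤ B.card :=
  Nat.sInf_le ⟨B, hB, rfl⟩

/-- For `d ≥ 3` and `ε ∈ (0,1)`, the bracketing number of the family `R_d` of half-open
axis-parallel boxes in `[0,1]^d` satisfies
`N_[](ε, R_d, ‖·‖_{L¹}) ≤ ((d^d/d!) (2/ε)^d)² = (d^d/d!)² 2^{2d} ε^{-2d}`. -/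
theorem bracketingNumberR_le (d : ℕ) (hd : 3 ≤ d) (ε : ℝ) (hε : ε ∈ Set.Ioo (0 : ℝ) 1) :
    (bracketingNumberR d ε : ℝ) ≤ ((d : ℝ) ^ d / (Nat.factorial d) * (2 / ε) ^ d) ^ 2 ∧
    ((d : ℝ) ^ d / (Nat.factorial d) * (2 / ε) ^ d) ^ 2 =
      ((d : ℝ) ^ d / (Nat.factorial d)) ^ 2 * 2 ^ (2 * d) * (1 / ε) ^ (2 * d) := by
  obtain ⟨hε₀, hε₁⟩ := hε
  have hδ : 0 < ε / 2 := half_pos hε₀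
  obtain ⟨A, hA, hcard⟩ := exists_isAnchoredBracketing (d := d) (by omega) hδ (by linarith)
  have hbound := anchoredBound_le hd hδ (by linarith)
  rw [one_div_div] at hbound
  have hN : bracketingNumberR d ε ≤ A.card ^ 2 :=
    (bracketingNumberR_le_card hA.isBracketingCoverR).trans
      (card_image_le.trans (card_product A A).le |>.trans_eq (sq _).symm)
  refine ⟨?_, by ring⟩
  calc (bracketingNumberR d ε : ℝ) ≤ (A.card : ℝ) ^ 2 := by exact_mod_cast hN
    _ ≤ _ := by gcongr; exact hcard.trans hbound
end

section
/- Let d ∈ ℕ with d ≥ 3 and ε ∈ (0,1). If x^{(1)}, …, x^{(n)} ∈ [0,1]^d are such that the indicator functions of the anchored boxes [0, x^{(i)}) are pairwise ε-separated in L¹, i.e., λ^d([0,x^{(i)}) Δ [0,x^{(j)})) > ε for all i ≠ j, then n ≤ (d^d/d!) · ε^{−d} ≤ (1/√(2πd)) · e^d · ε^{−d}. In other words, the L¹-packing number of the family C_d of anchored boxes satisfies P(ε, C_d, ‖·‖_{L¹}) ≤ (d^d/d!)·ε^{−d}. -/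
open MeasureTheory

/-- The anchored box `[0, x) = ∏_j [0, x_j)` in `ℝ^d`. -/
def anchoredBox (d : ℕ) (x : Fin d → ℝ) : Set (Fin d → ℝ) :=
  Set.univ.pi fun j => Set.Ico 0 (x j)

/-!
Put `θ = ε / d` and `N = ⌈1/θ⌉`. A greedy rule assigns to every corner `x ∈ [0,1]^d` labels
`0 = S₀ < S₁ < ⋯ < S_d ≤ N`, where `1 - θ S_j` tracks the partial volume `∏_{k<j} x_k`. The
labels determine a bracket `l ≤ x ≤ u` with `∏ u - ∏ l ≤ θ d = ε`, and two boxes with corners in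
a common bracket differ by a subset of `[0, u) \ [0, l)`. So `ε`-separated corners have distinct
label sets `{S₁, …, S_d} ⊆ {1, …, N}`, whence `n ≤ C(N, d) ≤ (N - 1)^d / d! ≤ (d/ε)^d / d!`
(pairing the factors `N` and `N - 2` needs `d ≥ 3`). The second inequality is Stirling's lower
bound for `d!`.
-/

open Finset

section Boxes

variable {d : ℕ}

theorem anchoredBox_mono {a b : Fin d → ℝ} (h : a ≤ b) : anchoredBox d a ⊆ anchoredBox d b :=
  Set.pi_mono fun j _ => Set.Ico_subset_Ico_right (h j)

theorem measurableSet_anchoredBox (a : Fin d → ℝ) : MeasurableSet (anchoredBox d a) :=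
  MeasurableSet.univ_pi fun _ => measurableSet_Ico

theorem volume_anchoredBox {a : Fin d → ℝ} (ha : 0 ≤ a) :
    volume (anchoredBox d a) = ENNReal.ofReal (∏ j, a j) := by
  simp only [anchoredBox, volume_pi_pi, Real.volume_Ico, sub_zero]
  exact (ENNReal.ofReal_prod_of_nonneg fun j _ => ha j).symm

theorem symmDiff_anchoredBox_subset {l a b u : Fin d → ℝ} (hla : l ≤ a) (hlb : l ≤ b)
    (hau : a ≤ u) (hbu : b ≤ u) :
    symmDiff (anchoredBox d a) (anchoredBox d b) ⊆ anchoredBox d u \ anchoredBox d l := by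
  rw [symmDiff_eq_sup_sdiff_inf]
  exact Set.sdiff_subset_sdiff
    (Set.union_subset (anchoredBox_mono hau) (anchoredBox_mono hbu))
    (Set.subset_inter (anchoredBox_mono hla) (anchoredBox_mono hlb))

theorem toReal_volume_symmDiff_anchoredBox_le {l a b u : Fin d → ℝ} (hl : 0 ≤ l) (hla : l ≤ a)
    (hlb : l ≤ b) (hau : a ≤ u) (hbu : b ≤ u) :
    (volume (symmDiff (anchoredBox d a) (anchoredBox d b))).toReal ≤ ∏ j, u j - ∏ j, l j := by
  have hu : volume (anchoredBox d u) ≠ ⊤ := by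
    rw [volume_anchoredBox (hl.trans (hla.trans hau))]; exact ENNReal.ofReal_ne_top
  calc volume.real (symmDiff (anchoredBox d a) (anchoredBox d b))
      ≤ volume.real (anchoredBox d u \ anchoredBox d l) :=
        measureReal_mono (symmDiff_anchoredBox_subset hla hlb hau hbu)
          (measure_ne_top_of_subset Set.sdiff_subset hu)
    _ = ∏ j, u j - ∏ j, l j := by
        rw [measureReal_sdiff (anchoredBox_mono (hla.trans hau)) (measurableSet_anchoredBox l) hu,
          measureReal_def, measureReal_def, volume_anchoredBox hl,
          volume_anchoredBox (hl.trans (hla.trans hau)),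
          ENNReal.toReal_ofReal (prod_nonneg fun j _ => hl j),
          ENNReal.toReal_ofReal (prod_nonneg fun j _ => hl j |>.trans (hla.trans hau j))]

end Boxes

theorem Finset.prod_sub_prod_le_sum_mul_prod_lt {ι R : Type*} [LinearOrder ι] [CommRing R]
    [LinearOrder R] [IsStrictOrderedRing R] (s : Finset ι) {l u : ι → R} (hl : ∀ i ∈ s, 0 ≤ l i)
    (hlu : ∀ i ∈ s, l i ≤ u i) (hu : ∀ i ∈ s, u i ≤ 1) :
    ∏ i ∈ s, u i - ∏ i ∈ s, l i ≤ ∑ i ∈ s, (u i - l i) * ∏ j ∈ s with j < i, l j := by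
  have h := prod_sub_ordered s u (u - l)
  simp only [Pi.sub_apply, sub_sub_cancel] at h
  rw [h, sub_sub_cancel]
  refine sum_le_sum fun i hi => mul_le_of_le_one_right ?_ ?_
  · exact mul_nonneg (sub_nonneg.2 (hlu i hi)) (prod_nonneg fun j hj => hl j (mem_filter.1 hj).1)
  · exact prod_le_one (fun j hj => (hl j (mem_filter.1 hj).1).trans (hlu j (mem_filter.1 hj).1))
      fun j hj => hu j (mem_filter.1 hj).1

section Greedy

variable (N d : ℕ) (θ : ℝ) (X : ℕ → ℝ)

/-- With `S_j = cellLabel j`, the level `1 - θ S_j` tracks `∏ k < j, X k`: step `j` spends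
`⌊(1 - X j) (1 - θ S_j) / θ⌋` units of width `θ`, plus one unit that makes the labels strictly
increasing, and the cap `N - d + j` keeps `S_d ≤ N`. -/
noncomputable def cellLabel : ℕ → ℕ
  | 0 => 0
  | j + 1 => min (cellLabel j + 1 + ⌊(1 - X j) * (1 - θ * cellLabel j) / θ⌋₊) (N - d + (j + 1))

noncomputable def cellLevel (j : ℕ) : ℝ := 1 - θ * cellLabel N d θ X j

noncomputable def cellUpper (j : ℕ) : ℝ :=
  (cellLevel N d θ X (j + 1) + θ) / cellLevel N d θ X j

-- Once the cap is hit the label no longer reflects `X j`, so only the trivial lower bound remains.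
noncomputable def cellLower (j : ℕ) : ℝ :=
  if cellLabel N d θ X (j + 1) = N - d + (j + 1) then 0
  else cellLevel N d θ X (j + 1) / cellLevel N d θ X j

theorem cellLabel_le_cap : ∀ j, cellLabel N d θ X j ≤ N - d + j
  | 0 => Nat.zero_le _
  | _ + 1 => min_le_right _ _

theorem cellLabel_lt_succ (j : ℕ) : cellLabel N d θ X j < cellLabel N d θ X (j + 1) :=
  lt_min (by omega) (by have := cellLabel_le_cap N d θ X j; omega)

theorem cellLabel_strictMono : StrictMono (cellLabel N d θ X) :=
  strictMono_nat_of_lt_succ (cellLabel_lt_succ N d θ X)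

theorem cellLabel_succ_eq_cap {j : ℕ} (h : cellLabel N d θ X j = N - d + j) :
    cellLabel N d θ X (j + 1) = N - d + (j + 1) :=
  le_antisymm (cellLabel_le_cap N d θ X _) (by have := cellLabel_lt_succ N d θ X j; omega)

variable {N d θ}

theorem cellLevel_pos_of_lt (hθ : 0 ≤ θ) (hN : θ * N < 1 + θ) {j : ℕ}
    (hj : cellLabel N d θ X j < N) : 0 < cellLevel N d θ X j := by
  have hS : (cellLabel N d θ X j : ℝ) + 1 ≤ N := by exact_mod_cast hj
  rw [cellLevel]; nlinarith

theorem cellLevel_pos (hθ : 0 ≤ θ) (hdN : d ≤ N) (hN : θ * N < 1 + θ) {j : ℕ} (hj : j < d) :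
    0 < cellLevel N d θ X j :=
  cellLevel_pos_of_lt X hθ hN (by have := cellLabel_le_cap N d θ X j; omega)

theorem cellUpper_le_one (hθ : 0 ≤ θ) (hdN : d ≤ N) (hN : θ * N < 1 + θ) {j : ℕ} (hj : j < d) :
    cellUpper N d θ X j ≤ 1 := by
  have hP := cellLevel_pos X hθ hdN hN hj
  have hS : (cellLabel N d θ X j : ℝ) + 1 ≤ cellLabel N d θ X (j + 1) := by
    exact_mod_cast cellLabel_lt_succ N d θ X j
  rw [cellUpper, div_le_one hP, cellLevel, cellLevel]; nlinarith

theorem le_cellUpper (hθ : 0 < θ) (hdN : d ≤ N) (hN : θ * N < 1 + θ) {j : ℕ} (hj : j < d)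
    (hX : X j ≤ 1) : X j ≤ cellUpper N d θ X j := by
  have hP := cellLevel_pos X hθ.le hdN hN hj
  have hfloor := Nat.floor_le (div_nonneg (mul_nonneg (sub_nonneg.2 hX) hP.le) hθ.le)
  have hS : (cellLabel N d θ X (j + 1) : ℝ) ≤
      cellLabel N d θ X j + 1 + ⌊(1 - X j) * cellLevel N d θ X j / θ⌋₊ := by
    exact_mod_cast min_le_left _ _
  rw [cellUpper, le_div_iff₀ hP]
  rw [le_div_iff₀ hθ] at hfloor
  simp only [cellLevel] at *
  nlinarith

theorem cellLower_le (hθ : 0 < θ) (hdN : d ≤ N) (hN : θ * N < 1 + θ) {j : ℕ} (hj : j < d)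
    (hX : 0 ≤ X j) : cellLower N d θ X j ≤ X j := by
  unfold cellLower
  split_ifs with hcap
  · exact hX
  have hP := cellLevel_pos X hθ.le hdN hN hj
  have hfloor := Nat.lt_floor_add_one ((1 - X j) * cellLevel N d θ X j / θ)
  have hS : (cellLabel N d θ X (j + 1) : ℝ) =
      cellLabel N d θ X j + 1 + ⌊(1 - X j) * cellLevel N d θ X j / θ⌋₊ := by
    exact_mod_cast (min_choice _ _).resolve_right hcap
  rw [div_le_iff₀ hP]
  rw [div_lt_iff₀ hθ] at hfloor
  simp only [cellLevel] at *
  nlinarith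

theorem cellLower_nonneg (hθ : 0 ≤ θ) (hdN : d ≤ N) (hN : θ * N < 1 + θ) {j : ℕ} (hj : j < d) :
    0 ≤ cellLower N d θ X j := by
  unfold cellLower
  split_ifs with hcap
  · exact le_rfl
  have hS := cellLabel_le_cap N d θ X (j + 1)
  exact div_nonneg (cellLevel_pos_of_lt X hθ hN (by omega)).le (cellLevel_pos X hθ hdN hN hj).le

theorem cellLower_le_cellUpper (hθ : 0 ≤ θ) (hdN : d ≤ N) (hN : θ * N < 1 + θ) {j : ℕ}
    (hj : j < d) : cellLower N d θ X j ≤ cellUpper N d θ X j := by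
  have hP := cellLevel_pos X hθ hdN hN hj
  unfold cellLower cellUpper
  split_ifs with hcap
  · have hS : (cellLabel N d θ X (j + 1) : ℝ) ≤ N := by
      have := cellLabel_le_cap N d θ X (j + 1); exact_mod_cast (by omega : _ ≤ N)
    refine div_nonneg ?_ hP.le
    rw [cellLevel]; nlinarith
  · gcongr; linarith

theorem prod_cellLower_eq_or (hθ : 0 ≤ θ) (hdN : d ≤ N) (hN : θ * N < 1 + θ) :
    ∀ m ≤ d, (∏ k ∈ range m, cellLower N d θ X k = cellLevel N d θ X m) ∨
      (∏ k ∈ range m, cellLower N d θ X k = 0 ∧ cellLabel N d θ X m = N - d + m)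
  | 0, _ => by simp [cellLevel, cellLabel]
  | m + 1, hm => by
    rw [prod_range_succ]
    rcases prod_cellLower_eq_or hθ hdN hN m (by omega) with h | ⟨h, hcap⟩
    · by_cases hcap : cellLabel N d θ X (m + 1) = N - d + (m + 1)
      · exact .inr ⟨by rw [cellLower, if_pos hcap, mul_zero], hcap⟩
      · refine .inl ?_
        rw [h, cellLower, if_neg hcap, mul_div_cancel₀ _ (cellLevel_pos X hθ hdN hN hm).ne']
    · exact .inr ⟨by rw [h, zero_mul], cellLabel_succ_eq_cap N d θ X hcap⟩

theorem cellUpper_mul_prod_cellLower (hθ : 0 ≤ θ) (hdN : d ≤ N) (hN : θ * N < 1 + θ) {m : ℕ}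
    (hm : m < d) :
    cellUpper N d θ X m * ∏ k ∈ range m, cellLower N d θ X k =
      θ + cellLevel N d θ X (m + 1) - cellLevel N d θ X m + ∏ k ∈ range m, cellLower N d θ X k := by
  rcases prod_cellLower_eq_or X hθ hdN hN m hm.le with h | ⟨h, hcap⟩
  · rw [h, cellUpper, div_mul_cancel₀ _ (cellLevel_pos X hθ hdN hN hm).ne']
    ring
  · have hS : (cellLabel N d θ X (m + 1) : ℝ) = cellLabel N d θ X m + 1 := by
      rw [cellLabel_succ_eq_cap N d θ X hcap, hcap]; push_cast; ring
    rw [h, cellLevel, cellLevel, hS]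
    ring

theorem sum_cellUpper_sub_cellLower (hθ : 0 ≤ θ) (hdN : d ≤ N) (hN : θ * N < 1 + θ) :
    ∀ m ≤ d, ∑ j ∈ range m, (cellUpper N d θ X j - cellLower N d θ X j) *
        ∏ k ∈ range j, cellLower N d θ X k =
      θ * m + cellLevel N d θ X m - ∏ k ∈ range m, cellLower N d θ X k
  | 0, _ => by simp [cellLevel, cellLabel]
  | m + 1, hm => by
    rw [sum_range_succ, sum_cellUpper_sub_cellLower hθ hdN hN m (by omega), sub_mul,
      cellUpper_mul_prod_cellLower X hθ hdN hN hm, prod_range_succ]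
    push_cast
    ring

theorem prod_cellUpper_sub_prod_cellLower_le (hθ : 0 ≤ θ) (hdN : d ≤ N) (hN₁ : 1 ≤ θ * N)
    (hN : θ * N < 1 + θ) :
    ∏ j ∈ range d, cellUpper N d θ X j - ∏ j ∈ range d, cellLower N d θ X j ≤ θ * d := by
  have hfilter : ∀ i ∈ range d, {j ∈ range d | j < i} = range i := fun i hi => by
    ext j; simp only [mem_filter, mem_range] at hi ⊢; omega
  refine (prod_sub_prod_le_sum_mul_prod_lt (range d)
    (fun i hi => cellLower_nonneg X hθ hdN hN (mem_range.1 hi))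
    (fun i hi => cellLower_le_cellUpper X hθ hdN hN (mem_range.1 hi))
    (fun i hi => cellUpper_le_one X hθ hdN hN (mem_range.1 hi))).trans ?_
  rw [sum_congr rfl fun i hi => by rw [hfilter i hi],
    sum_cellUpper_sub_cellLower X hθ hdN hN d le_rfl]
  rcases prod_cellLower_eq_or X hθ hdN hN d le_rfl with h | ⟨h, hcap⟩
  · rw [h, add_sub_cancel_right]
  · rw [h, cellLevel, hcap, Nat.sub_add_cancel hdN]
    linarith

end Greedy

section Cells

variable {N d : ℕ} {θ : ℝ}

theorem cellLower_le_and_le_cellUpper (hθ : 0 < θ) (hdN : d ≤ N) (hN : θ * N < 1 + θ)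
    {x : Fin d → ℝ} (hx : x ∈ Set.Icc 0 1) (j : Fin d) :
    cellLower N d θ (Function.extend Fin.val x 0) j ≤ x j ∧
      x j ≤ cellUpper N d θ (Function.extend Fin.val x 0) j := by
  have hxj : Function.extend Fin.val x 0 j = x j := Fin.val_injective.extend_apply x 0 j
  rw [← hxj]
  exact ⟨cellLower_le _ hθ hdN hN j.isLt (hxj ▸ hx.1 j),
    le_cellUpper _ hθ hdN hN j.isLt (hxj ▸ hx.2 j)⟩

theorem toReal_volume_symmDiff_le_of_cellLabel_eq (hθ : 0 < θ) (hdN : d ≤ N)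
    (hN₁ : 1 ≤ θ * N) (hN : θ * N < 1 + θ) {x y : Fin d → ℝ} (hx : x ∈ Set.Icc 0 1)
    (hy : y ∈ Set.Icc 0 1)
    (hxy : ∀ j ≤ d, cellLabel N d θ (Function.extend Fin.val x 0) j =
      cellLabel N d θ (Function.extend Fin.val y 0) j) :
    (volume (symmDiff (anchoredBox d x) (anchoredBox d y))).toReal ≤ θ * d := by
  set X := Function.extend Fin.val x 0
  set Y := Function.extend Fin.val y 0
  have hU (j : Fin d) : cellUpper N d θ Y j = cellUpper N d θ X j := by
    simp only [cellUpper, cellLevel, hxy j j.isLt.le, hxy (j + 1) j.isLt]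
  have hL (j : Fin d) : cellLower N d θ Y j = cellLower N d θ X j := by
    simp only [cellLower, cellLevel, hxy j j.isLt.le, hxy (j + 1) j.isLt]
  have hbx := cellLower_le_and_le_cellUpper hθ hdN hN hx
  have hby := cellLower_le_and_le_cellUpper hθ hdN hN hy
  calc _ ≤ ∏ j : Fin d, cellUpper N d θ X j - ∏ j : Fin d, cellLower N d θ X j :=
        toReal_volume_symmDiff_anchoredBox_le (fun j => cellLower_nonneg X hθ.le hdN hN j.isLt)
          (fun j => (hbx j).1) (fun j => hL j ▸ (hby j).1) (fun j => (hbx j).2)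
          (fun j => hU j ▸ (hby j).2)
    _ ≤ θ * d := by
        rw [Fin.prod_univ_eq_prod_range (cellUpper N d θ X),
          Fin.prod_univ_eq_prod_range (cellLower N d θ X)]
        exact prod_cellUpper_sub_prod_cellLower_le X hθ.le hdN hN₁ hN

end Cells

section Labels

variable (N d : ℕ) (θ : ℝ)

noncomputable def cellLabelSet (X : ℕ → ℝ) : Finset ℕ :=
  univ.image fun j : Fin d => cellLabel N d θ X (j + 1)

variable {N d θ}

theorem strictMono_cellLabel_succ (X : ℕ → ℝ) :
    StrictMono fun j : Fin d => cellLabel N d θ X (j + 1) :=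
  fun _ _ hij => cellLabel_strictMono N d θ X (Nat.succ_lt_succ hij)

theorem cellLabelSet_mem_powersetCard (hdN : d ≤ N) (X : ℕ → ℝ) :
    cellLabelSet N d θ X ∈ powersetCard d (Icc 1 N) := by
  refine mem_powersetCard.2 ⟨fun s hs => ?_, ?_⟩
  · obtain ⟨j, -, rfl⟩ := mem_image.1 hs
    have hpos := cellLabel_strictMono N d θ X j.val.succ_pos
    have hcap := cellLabel_le_cap N d θ X (j + 1)
    simp only [mem_Icc, cellLabel] at hpos ⊢
    omega
  · rw [cellLabelSet, card_image_of_injective _ (strictMono_cellLabel_succ X).injective,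
      card_univ, Fintype.card_fin]

theorem cellLabel_eq_of_cellLabelSet_eq {X Y : ℕ → ℝ}
    (h : cellLabelSet N d θ X = cellLabelSet N d θ Y) :
    ∀ j ≤ d, cellLabel N d θ X j = cellLabel N d θ Y j := by
  have hfun := ((strictMono_cellLabel_succ X).range_inj (strictMono_cellLabel_succ Y)).1 <| by
    simpa [cellLabelSet, Set.image_univ] using congrArg ((↑) : Finset ℕ → Set ℕ) h
  rintro (_ | j) hj
  · rfl
  · exact congrFun hfun ⟨j, hj⟩

end Labels

theorem card_le_choose_ceil_inv_of_separated {d : ℕ} {θ : ℝ} (hθ : 0 < θ) (hθd : θ * d ≤ 1)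
    {n : ℕ} (x : Fin n → Fin d → ℝ) (hx : ∀ i, x i ∈ Set.Icc 0 1)
    (hsep : ∀ i j, i ≠ j →
      θ * d < (volume (symmDiff (anchoredBox d (x i)) (anchoredBox d (x j)))).toReal) :
    n ≤ ⌈θ⁻¹⌉₊.choose d := by
  set N := ⌈θ⁻¹⌉₊
  have hN₁ : 1 ≤ θ * N := by
    simpa [hθ.ne'] using mul_le_mul_of_nonneg_left (Nat.le_ceil θ⁻¹) hθ.le
  have hN : θ * N < 1 + θ := by
    simpa [mul_add, hθ.ne'] using
      mul_lt_mul_of_pos_left (Nat.ceil_lt_add_one (inv_nonneg.2 hθ.le)) hθ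
  have hdN : d ≤ N := by
    refine Nat.cast_le.1 (le_trans ?_ (Nat.le_ceil θ⁻¹))
    rw [← one_div, le_div_iff₀ hθ, mul_comm]
    exact hθd
  have := card_le_card_of_injOn (s := univ)
    (fun i => cellLabelSet N d θ (Function.extend Fin.val (x i) 0))
    (fun i _ => cellLabelSet_mem_powersetCard hdN _) fun i _ j _ hij => by
      by_contra hne
      exact (hsep i j hne).not_ge (toReal_volume_symmDiff_le_of_cellLabel_eq hθ hdN hN₁ hN
        (hx i) (hx j) (cellLabel_eq_of_cellLabelSet_eq hij))
  simpa using this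

theorem Nat.descFactorial_le_sub_one_pow {n k : ℕ} (hk : 3 ≤ k) :
    n.descFactorial k ≤ (n - 1) ^ k := by
  obtain ⟨m, rfl⟩ : ∃ m, k = m + 3 := ⟨k - 3, by omega⟩
  rcases n with _ | _ | _ | n
  iterate 3 rw [Nat.descFactorial_eq_zero_iff_lt.2 (by omega)]; exact Nat.zero_le _
  have hm : n.descFactorial m ≤ (n + 2) ^ m :=
    (n.descFactorial_le_pow m).trans (Nat.pow_le_pow_left (by omega) m)
  simp only [Nat.succ_descFactorial_succ, Nat.add_sub_cancel]
  calc (n + 3) * ((n + 2) * ((n + 1) * n.descFactorial m))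
      = (n + 3) * (n + 1) * (n + 2) * n.descFactorial m := by ring
    _ ≤ (n + 2) ^ 2 * (n + 2) * (n + 2) ^ m := by gcongr; nlinarith
    _ = (n + 2) ^ (m + 3) := by ring

theorem Nat.choose_le_sub_one_pow_div_factorial {n k : ℕ} (hk : 3 ≤ k) :
    (n.choose k : ℝ) ≤ ((n - 1 : ℕ) : ℝ) ^ k / k.factorial := by
  rw [le_div_iff₀ (by positivity), mul_comm]
  exact_mod_cast
    Nat.descFactorial_eq_factorial_mul_choose n k ▸ Nat.descFactorial_le_sub_one_pow hk

theorem pow_div_factorial_le_exp_div_sqrt {n : ℕ} (hn : n ≠ 0) :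
    (n : ℝ) ^ n / n.factorial ≤ 1 / √(2 * Real.pi * n) * Real.exp n := by
  have hs := Stirling.le_factorial_stirling n
  rw [div_pow, Real.exp_one_pow, mul_div_assoc', div_le_iff₀ (Real.exp_pos _)] at hs
  have h0 : 0 < √(2 * Real.pi * n) := by positivity
  rw [div_le_iff₀ (by positivity), one_div, inv_mul_eq_div, div_mul_eq_mul_div, le_div_iff₀ h0]
  linarith

/-- Packing bound for anchored boxes: if the anchored boxes `[0, x i)`, `i = 1, …, n`, with
corners `x i ∈ [0,1]^d` are pairwise `ε`-separated in `L¹`, i.e.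
`λ^d([0, x i) Δ [0, x j)) > ε` for `i ≠ j`, then
`n ≤ (d^d/d!) ε^{-d} ≤ (1/√(2πd)) e^d ε^{-d}` (for `d ≥ 3`, `ε ∈ (0,1)`). -/
theorem packing_anchored_boxes (d : ℕ) (hd : 3 ≤ d) (ε : ℝ) (hε : ε ∈ Set.Ioo (0 : ℝ) 1)
    (n : ℕ) (x : Fin n → (Fin d → ℝ)) (hx : ∀ i, x i ∈ Set.Icc (0 : Fin d → ℝ) 1)
    (hsep : ∀ i j, i ≠ j →
      ε < (volume (symmDiff (anchoredBox d (x i)) (anchoredBox d (x j)))).toReal) :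
    (n : ℝ) ≤ (d : ℝ) ^ d / (Nat.factorial d) * (1 / ε) ^ d ∧
    (d : ℝ) ^ d / (Nat.factorial d) * (1 / ε) ^ d ≤
      1 / Real.sqrt (2 * Real.pi * d) * Real.exp d * (1 / ε) ^ d := by
  obtain ⟨hε₀, hε₁⟩ := hε
  have hd₀ : (0 : ℝ) < d := Nat.cast_pos.2 (by omega)
  set θ := ε / d
  have hθ : 0 < θ := div_pos hε₀ hd₀
  have hθd : θ * d = ε := div_mul_cancel₀ ε hd₀.ne'
  have hcount : n ≤ ⌈θ⁻¹⌉₊.choose d :=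
    card_le_choose_ceil_inv_of_separated hθ (hθd ▸ hε₁.le) x hx (hθd ▸ hsep)
  have hN : ((⌈θ⁻¹⌉₊ - 1 : ℕ) : ℝ) ≤ d * (1 / ε) := by
    refine (Nat.cast_le.2 (by have := Nat.ceil_le_floor_add_one θ⁻¹; omega)).trans
      ((Nat.floor_le (inv_nonneg.2 hθ.le)).trans_eq ?_)
    rw [inv_div, div_eq_mul_one_div]
  refine ⟨?_, by gcongr; exact pow_div_factorial_le_exp_div_sqrt (by omega)⟩
  calc (n : ℝ) ≤ ⌈θ⁻¹⌉₊.choose d := by exact_mod_cast hcount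
    _ ≤ ((⌈θ⁻¹⌉₊ - 1 : ℕ) : ℝ) ^ d / d.factorial := Nat.choose_le_sub_one_pow_div_factorial hd
    _ ≤ (d * (1 / ε)) ^ d / d.factorial := by gcongr
    _ = (d : ℝ) ^ d / d.factorial * (1 / ε) ^ d := by rw [mul_pow, mul_div_right_comm]
end
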